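/- arXiv:math/0702450 — 5 statements merged into one kernel-verified Lean document; each statement's English description precedes it below -/
import Mathlib

section
/- Consider the configuration φ_r on Z^d with H(0) = 2d, H(x) = 2d-1 for all other x in the cube C(r) = {x : max_i |x_i| ≤ r}, and H(x) = 2d-2 outside C(r). When φ_r is stabilized under the abelian sandpile toppling rule, every site x topples exactly max{r+1 − max_i |x_i|, 0} times. -/
/-- The `i`-th standard unit vector of `ℤ^d`. -/
def unitVec (d : ℕ) (i : Fin d) : Fin d → ℤ := fun j => if j = i then 1 else 0

/-- Height function obtained from the initial heights `H0` after performing `T x` (sandpile)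
topplings at every site `x`: each toppling of `x` removes `2d` particles from `x` and sends
one particle to each of its `2d` nearest neighbors. -/
def newH (d : ℕ) (H0 : (Fin d → ℤ) → ℤ) (T : (Fin d → ℤ) → ℕ) (x : Fin d → ℤ) : ℤ :=
  H0 x - 2 * d * T x + ∑ i : Fin d, ((T (x + unitVec d i) : ℤ) + (T (x - unitVec d i) : ℤ))

/-- A sandpile height function is stable if every site has at most `2d - 1` particles. -/
def SandpileStable (d : ℕ) (H : (Fin d → ℤ) → ℤ) : Prop := ∀ x, H x ≤ 2 * d - 1

/-- `T` is the odometer (toppling function of the stabilization) of the initial configuration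
`H0`: it has finite support, its result is stable, and it is pointwise minimal among all
finitely supported toppling functions with stable result (least action principle; this
characterizes the toppling function produced by legal topplings, by the abelian property). -/
def IsOdometer (d : ℕ) (H0 : (Fin d → ℤ) → ℤ) (T : (Fin d → ℤ) → ℕ) : Prop :=
  (Function.support T).Finite ∧ SandpileStable d (newH d H0 T) ∧
    ∀ T' : (Fin d → ℤ) → ℕ, (Function.support T').Finite →
      SandpileStable d (newH d H0 T') → ∀ x, T x ≤ T' x

/-- Initial configuration: `n` particles at the origin, background height `h` elsewhere. -/
def initH (d : ℕ) (n : ℕ) (h : ℤ) : (Fin d → ℤ) → ℤ := fun x => if x = 0 then (n : ℤ) else h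

/-- The configuration `φ_r`: `2d` particles at the origin, `2d - 1` at every other site of the
cube `C(r)`, and `2d - 2` outside `C(r)`. -/
noncomputable def phi (d : ℕ) (r : ℕ) : (Fin d → ℤ) → ℤ := fun x =>
  if x = 0 then 2 * d
  else if ∀ i, |x i| ≤ (r : ℤ) then 2 * d - 1
  else 2 * d - 2

/-!
The odometer is the least finitely supported toppling function with stable result, so it
suffices to show that the pyramid `p x = max (r + 1 - ‖x‖∞) 0` has stable result and lies below
every toppling function `T` with stable result.

The sup norm is convex (`2x = (x + v) + (x - v)`) and 1-Lipschitz. Hence `p` is superharmonic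
on the cube `C(r)`, where `φ_r` has at most `2d - 1` particles off the origin, while the origin
ends with no particles. At a site `x` outside `C(r)` some coordinate satisfies `|x k| > r`, so
only the two neighbours `x ± e_k` can topple, and convexity lets at most one of them topple,
once, which the background height `2d - 2` absorbs.

For the lower bound one shows by induction on `s` that `T ≥ s` on `C(r + 1 - s)`. If `T y = s`
at some `y` of `C(r - s)`, all neighbours of `y` have `T ≥ s`, and since `y` starts with at least
`2d - 1` particles stability forces equality at all of them. Stepping towards the origin
(decreasing the `ℓ¹` norm) propagates `T = s` to the origin, whose `2d` particles then cannot be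
stable.
-/

namespace Sandpile

variable {d : ℕ}

def supNorm (x : Fin d → ℤ) : ℕ := Finset.univ.sup fun i => (x i).natAbs

def l1Norm (x : Fin d → ℤ) : ℕ := ∑ i, (x i).natAbs

/-- `max (r + 1 - ‖x‖∞) 0`, via truncated subtraction on `ℕ`. -/
def pyramid (r : ℕ) (x : Fin d → ℤ) : ℕ := r + 1 - supNorm x

lemma natAbs_le_supNorm (x : Fin d → ℤ) (i : Fin d) : (x i).natAbs ≤ supNorm x :=
  Finset.le_sup (f := fun i => (x i).natAbs) (Finset.mem_univ i)

lemma supNorm_le_iff {x : Fin d → ℤ} {c : ℕ} : supNorm x ≤ c ↔ ∀ i, (x i).natAbs ≤ c := by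
  simp [supNorm]

lemma lt_supNorm_iff {x : Fin d → ℤ} {c : ℕ} : c < supNorm x ↔ ∃ i, c < (x i).natAbs := by
  simp [supNorm, Finset.lt_sup_iff]

lemma supNorm_le_iff_abs_le {x : Fin d → ℤ} {c : ℕ} : supNorm x ≤ c ↔ ∀ i, |x i| ≤ (c : ℤ) := by
  simp only [supNorm_le_iff, Int.abs_eq_natAbs, Nat.cast_le]

@[simp]
lemma supNorm_zero : supNorm (0 : Fin d → ℤ) = 0 := by
  simp [supNorm]

@[simp]
lemma supNorm_neg (x : Fin d → ℤ) : supNorm (-x) = supNorm x := by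
  simp [supNorm]

@[simp]
lemma supNorm_unitVec (i : Fin d) : supNorm (unitVec d i) = 1 := by
  refine le_antisymm (supNorm_le_iff.2 fun j => ?_) ?_
  · unfold unitVec; split_ifs <;> simp
  · simpa [unitVec] using natAbs_le_supNorm (unitVec d i) i

lemma supNorm_add_le (x v : Fin d → ℤ) : supNorm (x + v) ≤ supNorm x + supNorm v :=
  supNorm_le_iff.2 fun i =>
    (Int.natAbs_add_le _ _).trans (add_le_add (natAbs_le_supNorm x i) (natAbs_le_supNorm v i))

lemma supNorm_sub_le (x v : Fin d → ℤ) : supNorm (x - v) ≤ supNorm x + supNorm v := by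
  simpa [sub_eq_add_neg] using supNorm_add_le x (-v)

lemma supNorm_le_supNorm_add (x v : Fin d → ℤ) : supNorm x ≤ supNorm (x + v) + supNorm v := by
  simpa using supNorm_sub_le (x + v) v

lemma supNorm_le_supNorm_sub (x v : Fin d → ℤ) : supNorm x ≤ supNorm (x - v) + supNorm v := by
  simpa using supNorm_add_le (x - v) v

lemma two_mul_supNorm_le (x v : Fin d → ℤ) : 2 * supNorm x ≤ supNorm (x + v) + supNorm (x - v) := by
  suffices supNorm x ≤ (supNorm (x + v) + supNorm (x - v)) / 2 by omega
  refine supNorm_le_iff.2 fun i => ?_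
  have h₁ := natAbs_le_supNorm (x + v) i
  have h₂ := natAbs_le_supNorm (x - v) i
  simp only [Pi.add_apply, Pi.sub_apply] at h₁ h₂
  omega

lemma exists_inward_neighbor {y : Fin d → ℤ} (hy : y ≠ 0) :
    ∃ i, ∃ z, (z = y + unitVec d i ∨ z = y - unitVec d i) ∧
      supNorm z ≤ supNorm y ∧ l1Norm z < l1Norm y := by
  obtain ⟨i, hi⟩ := Function.ne_iff.mp hy
  obtain ⟨z, hz, hle, hlt⟩ : ∃ z, (z = y + unitVec d i ∨ z = y - unitVec d i) ∧
      (∀ j, (z j).natAbs ≤ (y j).natAbs) ∧ (z i).natAbs < (y i).natAbs := by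
    rcases lt_or_gt_of_ne hi with hneg | hpos
    · refine ⟨_, Or.inl rfl, fun j => ?_, ?_⟩ <;>
        simp only [Pi.add_apply, unitVec] <;> split_ifs <;> simp_all <;> omega
    · refine ⟨_, Or.inr rfl, fun j => ?_, ?_⟩ <;>
        simp only [Pi.sub_apply, unitVec] <;> split_ifs <;> simp_all <;> omega
  exact ⟨i, z, hz, supNorm_le_iff.2 fun j => (hle j).trans (natAbs_le_supNorm y j),
    Finset.sum_lt_sum (fun j _ => hle j) ⟨i, Finset.mem_univ i, hlt⟩⟩

section Toppling

variable {H0 : (Fin d → ℤ) → ℤ} {T : (Fin d → ℤ) → ℕ} {y : Fin d → ℤ}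

lemma newH_sub_self :
    newH d H0 T y - H0 y =
      ∑ i, (((T (y + unitVec d i) : ℤ) - T y) + ((T (y - unitVec d i) : ℤ) - T y)) := by
  simp only [newH, Finset.sum_add_distrib, Finset.sum_sub_distrib, Finset.sum_const,
    Finset.card_univ, Fintype.card_fin, nsmul_eq_mul]
  ring

lemma exists_neighbor_lt_of_newH_lt (h : newH d H0 T y < H0 y) :
    ∃ i, T (y + unitVec d i) < T y ∨ T (y - unitVec d i) < T y := by
  by_contra! hnb
  have : 0 ≤ newH d H0 T y - H0 y := by
    rw [newH_sub_self]
    exact Finset.sum_nonneg fun i _ => by have := hnb i; omega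
  omega

lemma neighbors_eq_of_newH_le (h : newH d H0 T y ≤ H0 y)
    (hnb : ∀ i, T y ≤ T (y + unitVec d i) ∧ T y ≤ T (y - unitVec d i)) (i : Fin d) :
    T (y + unitVec d i) = T y ∧ T (y - unitVec d i) = T y := by
  have hnonneg : ∀ j ∈ Finset.univ,
      0 ≤ ((T (y + unitVec d j) : ℤ) - T y) + ((T (y - unitVec d j) : ℤ) - T y) :=
    fun j _ => by have := hnb j; omega
  have hsum := newH_sub_self (H0 := H0) (T := T) (y := y)
  have := Finset.sum_nonneg hnonneg
  have := (Finset.sum_eq_zero_iff_of_nonneg hnonneg).1 (by omega) i (Finset.mem_univ i)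
  have := hnb i
  omega

end Toppling

section Phi

variable {r : ℕ} {x : Fin d → ℤ}

lemma phi_zero : phi d r 0 = 2 * d := by
  simp [phi]

lemma phi_of_supNorm_le (hx : x ≠ 0) (h : supNorm x ≤ r) : phi d r x = 2 * d - 1 := by
  simp [phi, hx, supNorm_le_iff_abs_le.1 h]

lemma phi_of_lt_supNorm (h : r < supNorm x) : phi d r x = 2 * d - 2 := by
  have hx : x ≠ 0 := by rintro rfl; simp at h
  have hcube : ¬ ∀ i, |x i| ≤ (r : ℤ) := by rw [← supNorm_le_iff_abs_le]; omega
  simp [phi, hx, hcube]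

end Phi

section LowerBound

variable {r : ℕ} {T : (Fin d → ℤ) → ℕ}

lemma succ_le_of_stable (hst : SandpileStable d (newH d (phi d r) T)) {s : ℕ}
    (ih : ∀ z, s + supNorm z ≤ r + 1 → s ≤ T z) (y : Fin d → ℤ)
    (hy : s + 1 + supNorm y ≤ r + 1) : s + 1 ≤ T y := by
  induction y using (measure l1Norm).wf.induction with
  | _ y ihy =>
  by_contra! hTy
  have hTs : T y = s := le_antisymm (by omega) (ih y (by omega))
  have hnb : ∀ i, T y ≤ T (y + unitVec d i) ∧ T y ≤ T (y - unitVec d i) := fun i =>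
    ⟨hTs ▸ ih _ (by have := supNorm_add_le y (unitVec d i); rw [supNorm_unitVec] at this; omega),
     hTs ▸ ih _ (by have := supNorm_sub_le y (unitVec d i); rw [supNorm_unitVec] at this; omega)⟩
  rcases eq_or_ne y 0 with rfl | hy0
  · obtain ⟨i, hi⟩ := exists_neighbor_lt_of_newH_lt (H0 := phi d r) (T := T)
      (by have := hst 0; rw [phi_zero]; omega)
    have := hnb i
    omega
  · obtain ⟨i, z, hz, hzy, hl1⟩ := exists_inward_neighbor hy0
    have hflat := neighbors_eq_of_newH_le (H0 := phi d r)
      (by have := hst y; rw [phi_of_supNorm_le hy0 (by omega)]; omega) hnb i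
    have hTz : T z = s := by rcases hz with rfl | rfl <;> omega
    have := ihy z hl1 (by omega)
    omega

lemma pyramid_le_of_stable (hst : SandpileStable d (newH d (phi d r) T)) (x : Fin d → ℤ) :
    pyramid r x ≤ T x := by
  have key : ∀ s x, s + supNorm x ≤ r + 1 → s ≤ T x := by
    intro s
    induction s with
    | zero => simp
    | succ s ih => exact succ_le_of_stable hst ih
  unfold pyramid
  rcases le_or_gt (supNorm x) (r + 1) with h | h
  · exact key _ x (by omega)
  · omega

lemma one_le_of_stable (hst : SandpileStable d (newH d (phi d r) T)) : 1 ≤ d := by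
  obtain ⟨i, -⟩ := exists_neighbor_lt_of_newH_lt (H0 := phi d r) (T := T) (y := 0)
    (by have := hst 0; rw [phi_zero]; omega)
  exact i.pos

end LowerBound

section UpperBound

variable {r : ℕ} {x : Fin d → ℤ}

lemma pyramid_eq_zero_of_lt_natAbs {k : Fin d} (h : r < (x k).natAbs) : pyramid r x = 0 := by
  have := natAbs_le_supNorm x k
  unfold pyramid
  omega

lemma finite_support_pyramid : (Function.support (pyramid (d := d) r)).Finite := by
  refine (Set.Finite.pi fun _ : Fin d => Set.finite_Icc (-(r : ℤ)) r).subset fun x hx i _ => ?_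
  have h : supNorm x ≤ r := by
    by_contra! h
    exact hx (by unfold pyramid; omega)
  exact abs_le.1 (supNorm_le_iff_abs_le.1 h i)

lemma pyramid_neighbors_le_of_supNorm_le (h : supNorm x ≤ r) (i : Fin d) :
    pyramid r (x + unitVec d i) + pyramid r (x - unitVec d i) ≤ 2 * pyramid r x := by
  have := two_mul_supNorm_le x (unitVec d i)
  have := supNorm_add_le x (unitVec d i)
  have := supNorm_sub_le x (unitVec d i)
  simp only [supNorm_unitVec, pyramid] at *
  omega

lemma pyramid_neighbors_le_one_of_lt_supNorm (h : r < supNorm x) (i : Fin d) :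
    pyramid r (x + unitVec d i) + pyramid r (x - unitVec d i) ≤ 1 := by
  have := two_mul_supNorm_le x (unitVec d i)
  have := supNorm_le_supNorm_add x (unitVec d i)
  have := supNorm_le_supNorm_sub x (unitVec d i)
  simp only [supNorm_unitVec, pyramid] at *
  omega

lemma newH_pyramid_zero : newH d (phi d r) (pyramid r) 0 = 0 := by
  simp only [newH, phi_zero, pyramid, supNorm_zero, supNorm_unitVec, supNorm_neg, zero_add,
    zero_sub, tsub_zero, add_tsub_cancel_right, Nat.cast_add, Nat.cast_one, Finset.sum_const,
    Finset.card_univ, Fintype.card_fin, Int.nsmul_eq_mul]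
  ring

lemma newH_pyramid_le_of_supNorm_le (hx : x ≠ 0) (h : supNorm x ≤ r) :
    newH d (phi d r) (pyramid r) x ≤ 2 * d - 1 := by
  have hsum : ∑ i, ((pyramid r (x + unitVec d i) : ℤ) + pyramid r (x - unitVec d i)) ≤
      ∑ _i : Fin d, 2 * (pyramid r x : ℤ) :=
    Finset.sum_le_sum fun i _ => by exact_mod_cast pyramid_neighbors_le_of_supNorm_le h i
  simp only [Finset.sum_const, Finset.card_univ, Fintype.card_fin, nsmul_eq_mul] at hsum
  rw [newH, phi_of_supNorm_le hx h]
  linarith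

lemma newH_pyramid_le_of_lt_supNorm (h : r < supNorm x) :
    newH d (phi d r) (pyramid r) x ≤ 2 * d - 1 := by
  obtain ⟨k, hk⟩ := lt_supNorm_iff.1 h
  have hsum : ∑ i, ((pyramid r (x + unitVec d i) : ℤ) + pyramid r (x - unitVec d i)) =
      (pyramid r (x + unitVec d k) : ℤ) + pyramid r (x - unitVec d k) := by
    refine Finset.sum_eq_single k (fun i _ hik => ?_) (by simp)
    rw [pyramid_eq_zero_of_lt_natAbs (k := k), pyramid_eq_zero_of_lt_natAbs (k := k)] <;>
      simp [unitVec, Ne.symm hik, hk]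
  have := pyramid_neighbors_le_one_of_lt_supNorm h k
  rw [newH, phi_of_lt_supNorm h, hsum, pyramid_eq_zero_of_lt_natAbs hk]
  omega

lemma stable_pyramid (hd : 1 ≤ d) : SandpileStable d (newH d (phi d r) (pyramid r)) := by
  intro x
  rcases eq_or_ne x 0 with rfl | hx
  · rw [newH_pyramid_zero]
    omega
  rcases le_or_gt (supNorm x) r with h | h
  · exact newH_pyramid_le_of_supNorm_le hx h
  · exact newH_pyramid_le_of_lt_supNorm h

end UpperBound

end Sandpile

theorem phi_odometer_formula_general (d : ℕ) (r : ℕ)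
    (T : (Fin d → ℤ) → ℕ) (hT : IsOdometer d (phi d r) T) :
    ∀ x : Fin d → ℤ,
      (T x : ℤ) = max ((r : ℤ) + 1 - ((Finset.univ.sup fun i => (x i).natAbs : ℕ) : ℤ)) 0 := by
  obtain ⟨-, hstable, hmin⟩ := hT
  intro x
  have hpyramid : T x = Sandpile.pyramid r x :=
    le_antisymm
      (hmin _ Sandpile.finite_support_pyramid
        (Sandpile.stable_pyramid (Sandpile.one_le_of_stable hstable)) x)
      (Sandpile.pyramid_le_of_stable hstable x)
  rw [hpyramid, Sandpile.pyramid, Sandpile.supNorm]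
  omega

/-- When `φ_r` is stabilized under the abelian sandpile toppling rule, every site `x` topples
exactly `max {r + 1 − max_i |x_i|, 0}` times. -/
theorem phi_odometer_formula (d : ℕ) (hd : 1 ≤ d) (r : ℕ)
    (T : (Fin d → ℤ) → ℕ) (hT : IsOdometer d (phi d r) T) :
    ∀ x : Fin d → ℤ,
      (T x : ℤ) = max ((r : ℤ) + 1 - ((Finset.univ.sup fun i => (x i).natAbs : ℕ) : ℤ)) 0 :=
  phi_odometer_formula_general d r T hT
end

section
/- In the abelian sandpile model on Z^d started from n particles at the origin on constant background h ≤ 2d-2, the final toppling function T_n satisfies: for every pair of sites x, z in the same parity class with z a next-nearest neighbor of x (differing in at most two coordinates with Σ_i ||x_i|−|z_i|| = 2) and d(x) ≤ d(z) in Euclidean distance, T_n(x) ≥ T_n(z). -/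
namespace SandAux

variable (d : ℕ)

def nbrSum (f : (Fin d → ℤ) → ℕ) (x : Fin d → ℤ) : ℕ :=
  ∑ i : Fin d, (f (x + unitVec d i) + f (x - unitVec d i))

def nxt (H0 : (Fin d → ℤ) → ℤ) (f : (Fin d → ℤ) → ℕ) (x : Fin d → ℤ) : ℕ :=
  ((H0 x + (nbrSum d f x : ℤ)) / (2 * d)).toNat

def ptop (H0 : (Fin d → ℤ) → ℤ) : ℕ → (Fin d → ℤ) → ℕ
  | 0 => fun _ => 0
  | t + 1 => nxt d H0 (ptop H0 t)

lemma nxt_le (hd : 1 ≤ d) (H0 : (Fin d → ℤ) → ℤ) (f g : (Fin d → ℤ) → ℕ) (x z : Fin d → ℤ)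
    (hH : H0 z ≤ H0 x) (hS : nbrSum d f z ≤ nbrSum d g x) : nxt d H0 f z ≤ nxt d H0 g x := by
  unfold nxt
  apply Int.toNat_le_toNat
  apply Int.ediv_le_ediv (by omega)
  have : (nbrSum d f z : ℤ) ≤ (nbrSum d g x : ℤ) := by exact_mod_cast hS
  omega

lemma ptop_mono (hd : 1 ≤ d) (H0 : (Fin d → ℤ) → ℤ) (t : ℕ) : ∀ x, ptop d H0 t x ≤ ptop d H0 (t+1) x := by
  induction t with
  | zero => intro x; exact Nat.zero_le _
  | succ t ih =>
      intro x
      apply nxt_le d hd H0 _ _ x x le_rfl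
      unfold nbrSum
      exact Finset.sum_le_sum (fun i _ => Nat.add_le_add (ih _) (ih _))

lemma ptop_le_odometer (hd : 1 ≤ d) (H0 : (Fin d → ℤ) → ℤ) (T : (Fin d → ℤ) → ℕ)
    (hstab : SandpileStable d (newH d H0 T)) (t : ℕ) : ∀ x, ptop d H0 t x ≤ T x := by
  induction t with
  | zero => intro x; exact Nat.zero_le _
  | succ t ih =>
      intro x
      show nxt d H0 (ptop d H0 t) x ≤ T x
      unfold nxt
      rw [Int.toNat_le]
      have hs : (nbrSum d (ptop d H0 t) x : ℤ) ≤
          ∑ i : Fin d, ((T (x + unitVec d i) : ℤ) + (T (x - unitVec d i) : ℤ)) := by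
        unfold nbrSum
        push_cast
        exact Finset.sum_le_sum (fun i _ => by
          have h1 := ih (x + unitVec d i); have h2 := ih (x - unitVec d i)
          have h1' : (ptop d H0 t (x + unitVec d i) : ℤ) ≤ T (x + unitVec d i) := by exact_mod_cast h1
          have h2' : (ptop d H0 t (x - unitVec d i) : ℤ) ≤ T (x - unitVec d i) := by exact_mod_cast h2
          omega)
      have hst := hstab x
      unfold newH at hst
      have hb : H0 x + (nbrSum d (ptop d H0 t) x : ℤ) ≤ 2 * d * T x + (2 * d - 1) := by omega
      have h2d : (0:ℤ) < 2 * d := by positivity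
      calc (H0 x + (nbrSum d (ptop d H0 t) x : ℤ)) / (2 * d)
          ≤ (2 * d * T x + (2 * d - 1)) / (2 * d) := Int.ediv_le_ediv h2d hb
        _ = T x := by
            have : 2 * (d:ℤ) * T x + (2 * d - 1) = (2*(d:ℤ) - 1) + (T x) * (2*d) := by ring
            rw [this, Int.add_mul_ediv_right _ _ (ne_of_gt h2d),
              Int.ediv_eq_zero_of_lt (by omega) (by omega), zero_add]

/-! ### Symmetries -/

def negAt (s : Finset (Fin d)) (x : Fin d → ℤ) : Fin d → ℤ :=
  fun j => if j ∈ s then -x j else x j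

lemma negAt_add_unit_notMem (s : Finset (Fin d)) (x : Fin d → ℤ) (i : Fin d) (hi : i ∉ s) :
    negAt d s x + unitVec d i = negAt d s (x + unitVec d i) := by
  funext j; simp only [negAt, Pi.add_apply, unitVec]
  by_cases hj : j ∈ s
  · have : j ≠ i := fun hji => hi (hji ▸ hj)
    simp [hj, this]
  · simp [hj]

lemma negAt_sub_unit_notMem (s : Finset (Fin d)) (x : Fin d → ℤ) (i : Fin d) (hi : i ∉ s) :
    negAt d s x - unitVec d i = negAt d s (x - unitVec d i) := by
  funext j; simp only [negAt, Pi.sub_apply, unitVec]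
  by_cases hj : j ∈ s
  · have : j ≠ i := fun hji => hi (hji ▸ hj)
    simp [hj, this]
  · simp [hj]

lemma negAt_add_unit_mem (s : Finset (Fin d)) (x : Fin d → ℤ) (i : Fin d) (hi : i ∈ s) :
    negAt d s x + unitVec d i = negAt d s (x - unitVec d i) := by
  funext j; simp only [negAt, Pi.add_apply, Pi.sub_apply, unitVec]
  by_cases hj : j ∈ s
  · split_ifs <;> simp_all <;> ring
  · have : j ≠ i := fun hji => hj (hji ▸ hi)
    simp [hj, this]

lemma negAt_sub_unit_mem (s : Finset (Fin d)) (x : Fin d → ℤ) (i : Fin d) (hi : i ∈ s) :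
    negAt d s x - unitVec d i = negAt d s (x + unitVec d i) := by
  funext j; simp only [negAt, Pi.add_apply, Pi.sub_apply, unitVec]
  by_cases hj : j ∈ s
  · split_ifs <;> simp_all <;> ring
  · have : j ≠ i := fun hji => hj (hji ▸ hi)
    simp [hj, this]

lemma nbrSum_negAt (s : Finset (Fin d)) (f : (Fin d → ℤ) → ℕ)
    (hf : ∀ y, f (negAt d s y) = f y) (x : Fin d → ℤ) :
    nbrSum d f (negAt d s x) = nbrSum d f x := by
  unfold nbrSum
  apply Finset.sum_congr rfl
  intro i _
  by_cases hi : i ∈ s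
  · rw [negAt_add_unit_mem d s x i hi, negAt_sub_unit_mem d s x i hi, hf, hf]
    exact Nat.add_comm _ _
  · rw [negAt_add_unit_notMem d s x i hi, negAt_sub_unit_notMem d s x i hi, hf, hf]

lemma negAt_eq_zero (s : Finset (Fin d)) (x : Fin d → ℤ) :
    (negAt d s x = 0) ↔ (x = 0) := by
  constructor <;> intro hx <;> funext j <;> have := congrFun hx j <;>
    simp only [negAt, Pi.zero_apply] at * <;> split_ifs at * <;> omega

lemma ptop_negAt (H0 : (Fin d → ℤ) → ℤ) (hH0 : ∀ s x, H0 (negAt d s x) = H0 x)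
    (t : ℕ) (s : Finset (Fin d)) (x : Fin d → ℤ) :
    ptop d H0 t (negAt d s x) = ptop d H0 t x := by
  induction t generalizing x with
  | zero => rfl
  | succ t ih =>
      show nxt d H0 _ _ = nxt d H0 _ _
      unfold nxt
      rw [hH0, nbrSum_negAt d s _ (fun y => ih y) x]

lemma comp_perm_add_unit (σ : Equiv.Perm (Fin d)) (x : Fin d → ℤ) (i : Fin d) :
    (x ∘ σ) + unitVec d i = (x + unitVec d (σ i)) ∘ σ := by
  funext j
  simp only [Pi.add_apply, Function.comp_apply, unitVec, EmbeddingLike.apply_eq_iff_eq]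

lemma comp_perm_sub_unit (σ : Equiv.Perm (Fin d)) (x : Fin d → ℤ) (i : Fin d) :
    (x ∘ σ) - unitVec d i = (x - unitVec d (σ i)) ∘ σ := by
  funext j
  simp only [Pi.sub_apply, Function.comp_apply, unitVec, EmbeddingLike.apply_eq_iff_eq]

lemma comp_perm_eq_zero (σ : Equiv.Perm (Fin d)) (x : Fin d → ℤ) :
    (x ∘ σ = 0) ↔ (x = 0) := by
  constructor <;> intro hx <;> funext j
  · have := congrFun hx (σ.symm j); simpa using this
  · have := congrFun hx (σ j); simpa using this

lemma ptop_perm (H0 : (Fin d → ℤ) → ℤ) (hH0 : ∀ (σ : Equiv.Perm (Fin d)) x, H0 (x ∘ σ) = H0 x)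
    (t : ℕ) (σ : Equiv.Perm (Fin d)) (x : Fin d → ℤ) :
    ptop d H0 t (x ∘ σ) = ptop d H0 t x := by
  induction t generalizing x with
  | zero => rfl
  | succ t ih =>
      show nxt d H0 _ _ = nxt d H0 _ _
      unfold nxt
      rw [hH0]
      have hs : nbrSum d (ptop d H0 t) (x ∘ σ) = nbrSum d (ptop d H0 t) x := by
        unfold nbrSum
        rw [← Equiv.sum_comp σ
          (fun i => ptop d H0 t (x + unitVec d i) + ptop d H0 t (x - unitVec d i))]
        apply Finset.sum_congr rfl
        intro i _
        rw [comp_perm_add_unit, comp_perm_sub_unit, ih, ih]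
      rw [hs]

/-! ### Invariant predicates and helpers -/

lemma negAt_apply_notMem (s : Finset (Fin d)) (y : Fin d → ℤ) (k : Fin d) (hk : k ∉ s) :
    negAt d s y k = y k := by simp [negAt, hk]

lemma exists_norm (y : Fin d → ℤ) :
    ∃ s : Finset (Fin d), (∀ k, -1 ≤ y k → 0 ≤ negAt d s y k) ∧ (∀ k, 0 ≤ y k → k ∉ s) := by
  refine ⟨Finset.univ.filter (fun k => y k < 0), fun k hk => ?_, fun k hk => ?_⟩
  · simp only [negAt, Finset.mem_filter, Finset.mem_univ, true_and]
    split_ifs with hlt <;> omega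
  · simp only [Finset.mem_filter, Finset.mem_univ, true_and]
    omega


lemma apply_add_unit (x : Fin d → ℤ) (i k : Fin d) :
    (x + unitVec d i) k = x k + if k = i then 1 else 0 := rfl

lemma apply_sub_unit (x : Fin d → ℤ) (i k : Fin d) :
    (x - unitVec d i) k = x k - if k = i then 1 else 0 := rfl

section Invariant

variable {d : ℕ} (f : (Fin d → ℤ) → ℕ)

def QA : Prop := ∀ x : Fin d → ℤ, (∀ k, 0 ≤ x k) → ∀ i,
  f (x + unitVec d i + unitVec d i) ≤ f x

def QB : Prop := ∀ x : Fin d → ℤ, (∀ k, 0 ≤ x k) → ∀ i j, i ≠ j →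
  f (x + unitVec d i + unitVec d j) ≤ f x

def QC : Prop := ∀ x : Fin d → ℤ, (∀ k, 0 ≤ x k) → ∀ i j, i ≠ j → 1 ≤ x j → x j ≤ x i + 1 →
  f (x + unitVec d i - unitVec d j) ≤ f x

variable {f}
variable (hsym : ∀ s y, f (negAt d s y) = f y)

include hsym

lemma helperA (hQA : QA f) (y : Fin d → ℤ) (hy : ∀ k, -1 ≤ y k) (i : Fin d) :
    f (y + unitVec d i + unitVec d i) ≤ f y := by
  by_cases hyi : 0 ≤ y i
  · obtain ⟨s, h0, h1⟩ := exists_norm d y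
    have hi : i ∉ s := h1 i hyi
    calc f (y + unitVec d i + unitVec d i)
        = f (negAt d s (y + unitVec d i + unitVec d i)) := (hsym s _).symm
      _ = f (negAt d s y + unitVec d i + unitVec d i) := by
          rw [negAt_add_unit_notMem d s y i hi, negAt_add_unit_notMem d s _ i hi]
      _ ≤ f (negAt d s y) := hQA _ (fun k => by
          by_cases hk : k ∈ s
          · simp only [negAt, hk, if_pos]; have := hy k
            by_contra hc
            exact (h1 k (by omega)) hk
          · rw [negAt_apply_notMem d s y k hk]
            by_contra hc
            have := h0 k (hy k)
            rw [negAt_apply_notMem d s y k hk] at this; omega) i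
      _ = f y := hsym s y
  · have hyi' : y i = -1 := by have := hy i; omega
    have key : negAt d {i} (y + unitVec d i + unitVec d i) = y := by
      funext k
      simp only [negAt, Pi.add_apply, unitVec, Finset.mem_singleton]
      split_ifs with h1
      · subst h1; omega
      · omega
    exact le_of_eq (by rw [← hsym {i} (y + unitVec d i + unitVec d i), key])


lemma helperCm (hQC : QC f) (y : Fin d → ℤ) (hy : ∀ k, -1 ≤ y k) (i j : Fin d) (hij : i ≠ j)
    (h1 : 1 ≤ y j) (h2 : y j ≤ y i + 1) :
    f (y + unitVec d i - unitVec d j) ≤ f y := by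
  obtain ⟨s, h0, hmem⟩ := exists_norm d y
  have hi : i ∉ s := hmem i (by omega)
  have hj : j ∉ s := hmem j (by omega)
  calc f (y + unitVec d i - unitVec d j)
      = f (negAt d s (y + unitVec d i - unitVec d j)) := (hsym s _).symm
    _ = f (negAt d s y + unitVec d i - unitVec d j) := by
        rw [← negAt_sub_unit_notMem d s (y + unitVec d i) j hj,
          ← negAt_add_unit_notMem d s y i hi]
    _ ≤ f (negAt d s y) := hQC _ (fun k => h0 k (hy k)) i j hij
        (by rw [negAt_apply_notMem d s y j hj]; omega)
        (by rw [negAt_apply_notMem d s y j hj, negAt_apply_notMem d s y i hi]; omega)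
    _ = f y := hsym s y

lemma helperB (hQB : QB f) (hQC : QC f) (y : Fin d → ℤ) (hy : ∀ k, -1 ≤ y k) (i j : Fin d)
    (hij : i ≠ j) (hyj : 0 ≤ y j) :
    f (y + unitVec d i + unitVec d j) ≤ f y := by
  by_cases hyi : 0 ≤ y i
  · obtain ⟨s, h0, hmem⟩ := exists_norm d y
    have hi : i ∉ s := hmem i hyi
    have hj : j ∉ s := hmem j hyj
    calc f (y + unitVec d i + unitVec d j)
        = f (negAt d s (y + unitVec d i + unitVec d j)) := (hsym s _).symm
      _ = f (negAt d s y + unitVec d i + unitVec d j) := by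
          rw [← negAt_add_unit_notMem d s (y + unitVec d i) j hj,
            ← negAt_add_unit_notMem d s y i hi]
      _ ≤ f (negAt d s y) := hQB _ (fun k => h0 k (hy k)) i j hij
      _ = f y := hsym s y
  · have hyi' : y i = -1 := by have := hy i; omega
    have key : negAt d {i} y = y + unitVec d i + unitVec d i := by
      funext k
      simp only [negAt, Pi.add_apply, unitVec, Finset.mem_singleton]
      split_ifs with h
      · subst h; omega
      · omega
    have hfy : f y = f (y + unitVec d i + unitVec d i) := by rw [← hsym {i} y, key]
    have hpt : y + unitVec d i + unitVec d j
        = (y + unitVec d i + unitVec d i) + unitVec d j - unitVec d i := by abel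
    rw [hpt, hfy]
    have hji : ¬ (j = i) := fun hc => hij hc.symm
    refine helperCm hsym hQC _ (fun k => ?_) j i hij.symm ?_ ?_
    · simp only [apply_add_unit]
      have := hy k
      split_ifs <;> omega
    · simp only [apply_add_unit]
      split_ifs <;> omega
    · simp only [apply_add_unit]
      split_ifs <;> first | omega | (exfalso; simp_all)

lemma helperC (hQB : QB f) (hQC : QC f) (y : Fin d → ℤ) (hy : ∀ k, -1 ≤ y k) (i j : Fin d)
    (hij : i ≠ j) (hyj : 0 ≤ y j) (h2 : y j ≤ y i + 1) :
    f (y + unitVec d i - unitVec d j) ≤ f y := by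
  by_cases h1 : 1 ≤ y j
  · exact helperCm hsym hQC y hy i j hij h1 h2
  · have hyj0 : y j = 0 := by have := hyj; omega
    have hji : ¬ (j = i) := fun hc => hij hc.symm
    have key : negAt d {j} (y + unitVec d i - unitVec d j) = y + unitVec d i + unitVec d j := by
      funext k
      simp only [negAt, Pi.add_apply, Pi.sub_apply, unitVec, Finset.mem_singleton]
      split_ifs with ha hb
      · exfalso; subst ha; exact hji hb
      · subst ha; omega
      · omega
      · omega
    have heq : f (y + unitVec d i - unitVec d j) = f (y + unitVec d i + unitVec d j) := by
      rw [← hsym {j} (y + unitVec d i - unitVec d j), key]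
    rw [heq]
    exact helperB hsym hQB hQC y hy i j hij hyj

end Invariant

/-! ### The main induction -/

lemma apply_add_self (x : Fin d → ℤ) (i : Fin d) : (x + unitVec d i) i = x i + 1 := by
  rw [apply_add_unit]; simp

lemma apply_add_ne (x : Fin d → ℤ) {i k : Fin d} (hk : k ≠ i) : (x + unitVec d i) k = x k := by
  rw [apply_add_unit]; simp [hk]

lemma apply_sub_self (x : Fin d → ℤ) (i : Fin d) : (x - unitVec d i) i = x i - 1 := by
  rw [apply_sub_unit]; simp

lemma apply_sub_ne (x : Fin d → ℤ) {i k : Fin d} (hk : k ≠ i) : (x - unitVec d i) k = x k := by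
  rw [apply_sub_unit]; simp [hk]

lemma bdd_add (x : Fin d → ℤ) (hx : ∀ k, 0 ≤ x k) (i : Fin d) :
    ∀ k, -1 ≤ (x + unitVec d i) k := by
  intro k; rw [apply_add_unit]; have := hx k; split_ifs <;> omega

lemma bdd_sub (x : Fin d → ℤ) (hx : ∀ k, 0 ≤ x k) (i : Fin d) :
    ∀ k, -1 ≤ (x - unitVec d i) k := by
  intro k; rw [apply_sub_unit]; have := hx k; split_ifs <;> omega

lemma ne_zero_of_coord (z : Fin d → ℤ) (i : Fin d) (hz : 1 ≤ z i) : z ≠ 0 := by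
  intro hc
  rw [hc] at hz
  simp at hz

section Main

variable {d n : ℕ} {h : ℤ}

lemma initH_negAt (s : Finset (Fin d)) (x : Fin d → ℤ) :
    initH d n h (negAt d s x) = initH d n h x := by
  unfold initH
  by_cases hx : x = 0
  · rw [if_pos ((negAt_eq_zero d s x).mpr hx), if_pos hx]
  · rw [if_neg (fun hc => hx ((negAt_eq_zero d s x).mp hc)), if_neg hx]

lemma initH_perm (σ : Equiv.Perm (Fin d)) (x : Fin d → ℤ) :
    initH d n h (x ∘ σ) = initH d n h x := by
  unfold initH
  by_cases hx : x = 0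
  · rw [if_pos ((comp_perm_eq_zero d σ x).mpr hx), if_pos hx]
  · rw [if_neg (fun hc => hx ((comp_perm_eq_zero d σ x).mp hc)), if_neg hx]

lemma initH_le (hn : h ≤ (n:ℤ)) (x z : Fin d → ℤ) (hz : z ≠ 0) :
    initH d n h z ≤ initH d n h x := by
  unfold initH
  rw [if_neg hz]
  split_ifs with h0
  · exact hn
  · exact le_rfl

theorem invariant (hd : 1 ≤ d) (hn : h ≤ (n:ℤ)) (t : ℕ) :
    QA (ptop d (initH d n h) t) ∧ QB (ptop d (initH d n h) t) ∧ QC (ptop d (initH d n h) t) := by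
  induction t with
  | zero => exact ⟨fun _ _ _ => le_rfl, fun _ _ _ _ _ => le_rfl, fun _ _ _ _ _ _ _ => le_rfl⟩
  | succ t ih =>
    obtain ⟨ihA, ihB, ihC⟩ := ih
    set F := ptop d (initH d n h) t with hF
    have hsym : ∀ s y, F (negAt d s y) = F y :=
      fun s y => ptop_negAt d (initH d n h) (fun s x => initH_negAt s x) t s y
    have hA := helperA hsym ihA
    have hB := helperB hsym ihB ihC
    have hC := helperC hsym ihB ihC
    refine ⟨?_, ?_, ?_⟩
    · -- QA
      intro x hx i
      show nxt d (initH d n h) F (x + unitVec d i + unitVec d i) ≤ nxt d (initH d n h) F x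
      refine nxt_le d hd _ F F x _ ?_ ?_
      · refine initH_le hn x _ (ne_zero_of_coord d _ i ?_)
        rw [apply_add_self, apply_add_self]
        have := hx i; omega
      · apply Finset.sum_le_sum
        intro k _
        by_cases hk : k = i
        · subst hk
          have e1 : x + unitVec d k + unitVec d k - unitVec d k = x + unitVec d k := by abel
          have e2 : x + unitVec d k + unitVec d k + unitVec d k
              = (x + unitVec d k) + unitVec d k + unitVec d k := by abel
          have e3 : (x - unitVec d k) + unitVec d k + unitVec d k = x + unitVec d k := by abel
          have l1 : F (x + unitVec d k + unitVec d k + unitVec d k) ≤ F (x - unitVec d k) := by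
            rw [e2]
            calc F ((x + unitVec d k) + unitVec d k + unitVec d k) ≤ F (x + unitVec d k) :=
                  hA _ (bdd_add d x hx k) k
              _ = F ((x - unitVec d k) + unitVec d k + unitVec d k) := by rw [e3]
              _ ≤ F (x - unitVec d k) := hA _ (bdd_sub d x hx k) k
          have l2 : F (x + unitVec d k + unitVec d k - unitVec d k) ≤ F (x + unitVec d k) := by
            rw [e1]
          omega
        · have e1 : x + unitVec d i + unitVec d i + unitVec d k
              = (x + unitVec d k) + unitVec d i + unitVec d i := by abel
          have e2 : x + unitVec d i + unitVec d i - unitVec d k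
              = (x - unitVec d k) + unitVec d i + unitVec d i := by abel
          have l1 : F (x + unitVec d i + unitVec d i + unitVec d k) ≤ F (x + unitVec d k) := by
            rw [e1]; exact hA _ (bdd_add d x hx k) i
          have l2 : F (x + unitVec d i + unitVec d i - unitVec d k) ≤ F (x - unitVec d k) := by
            rw [e2]; exact hA _ (bdd_sub d x hx k) i
          omega
    · -- QB
      intro x hx i j hij
      have hji : j ≠ i := fun hc => hij hc.symm
      show nxt d (initH d n h) F (x + unitVec d i + unitVec d j) ≤ nxt d (initH d n h) F x
      refine nxt_le d hd _ F F x _ ?_ ?_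
      · refine initH_le hn x _ (ne_zero_of_coord d _ i ?_)
        rw [apply_add_ne d _ hij, apply_add_self]
        have := hx i; omega
      · apply Finset.sum_le_sum
        intro k _
        by_cases hki : k = i
        · subst hki
          have e1 : x + unitVec d k + unitVec d j + unitVec d k
              = (x + unitVec d k) + unitVec d k + unitVec d j := by abel
          have e2 : x + unitVec d k + unitVec d j - unitVec d k
              = (x - unitVec d k) + unitVec d k + unitVec d j := by abel
          have l1 : F (x + unitVec d k + unitVec d j + unitVec d k) ≤ F (x + unitVec d k) := by
            rw [e1]
            refine hB _ (bdd_add d x hx k) k j hij ?_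
            rw [apply_add_ne d _ hji]; exact hx j
          have l2 : F (x + unitVec d k + unitVec d j - unitVec d k) ≤ F (x - unitVec d k) := by
            rw [e2]
            refine hB _ (bdd_sub d x hx k) k j hij ?_
            rw [apply_sub_ne d _ hji]; exact hx j
          omega
        · by_cases hkj : k = j
          · subst hkj
            have e1 : x + unitVec d i + unitVec d k + unitVec d k
                = (x + unitVec d k) + unitVec d k + unitVec d i := by abel
            have e2 : x + unitVec d i + unitVec d k - unitVec d k
                = (x - unitVec d k) + unitVec d k + unitVec d i := by abel
            have l1 : F (x + unitVec d i + unitVec d k + unitVec d k) ≤ F (x + unitVec d k) := by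
              rw [e1]
              refine hB _ (bdd_add d x hx k) k i hji ?_
              rw [apply_add_ne d _ hij]; exact hx i
            have l2 : F (x + unitVec d i + unitVec d k - unitVec d k) ≤ F (x - unitVec d k) := by
              rw [e2]
              refine hB _ (bdd_sub d x hx k) k i hji ?_
              rw [apply_sub_ne d _ hij]; exact hx i
            omega
          · have hik : i ≠ k := fun hc => hki hc.symm
            have hjk : j ≠ k := fun hc => hkj hc.symm
            have e1 : x + unitVec d i + unitVec d j + unitVec d k
                = (x + unitVec d k) + unitVec d i + unitVec d j := by abel
            have e2 : x + unitVec d i + unitVec d j - unitVec d k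
                = (x - unitVec d k) + unitVec d i + unitVec d j := by abel
            have l1 : F (x + unitVec d i + unitVec d j + unitVec d k) ≤ F (x + unitVec d k) := by
              rw [e1]
              refine hB _ (bdd_add d x hx k) i j hij ?_
              rw [apply_add_ne d _ hjk]; exact hx j
            have l2 : F (x + unitVec d i + unitVec d j - unitVec d k) ≤ F (x - unitVec d k) := by
              rw [e2]
              refine hB _ (bdd_sub d x hx k) i j hij ?_
              rw [apply_sub_ne d _ hjk]; exact hx j
            omega
    · -- QC
      intro x hx i j hij h1 h2
      have hji : j ≠ i := fun hc => hij hc.symm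
      by_cases hswap : x j = x i + 1
      · have hz : x + unitVec d i - unitVec d j = x ∘ (Equiv.swap i j) := by
          funext k
          by_cases hki : k = i
          · subst hki
            rw [apply_sub_ne d _ hij, apply_add_self, Function.comp_apply, Equiv.swap_apply_left]
            omega
          · by_cases hkj : k = j
            · subst hkj
              rw [apply_sub_self, apply_add_ne d _ hji, Function.comp_apply, Equiv.swap_apply_right]
              omega
            · rw [apply_sub_ne d _ hkj, apply_add_ne d _ hki, Function.comp_apply,
                Equiv.swap_apply_of_ne_of_ne hki hkj]
        rw [hz, ptop_perm d (initH d n h) (fun σ x => initH_perm σ x) (t+1) (Equiv.swap i j) x]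
      · have hlt : x j ≤ x i := by omega
        show nxt d (initH d n h) F (x + unitVec d i - unitVec d j) ≤ nxt d (initH d n h) F x
        refine nxt_le d hd _ F F x _ ?_ ?_
        · refine initH_le hn x _ (ne_zero_of_coord d _ i ?_)
          rw [apply_sub_ne d _ hij, apply_add_self]
          have := hx i; omega
        · apply Finset.sum_le_sum
          intro k _
          by_cases hki : k = i
          · subst hki
            have f1 : x + unitVec d k - unitVec d j + unitVec d k
                = (x + unitVec d k) + unitVec d k - unitVec d j := by abel
            have f2 : x + unitVec d k - unitVec d j - unitVec d k
                = (x - unitVec d k) + unitVec d k - unitVec d j := by abel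
            have l1 : F (x + unitVec d k - unitVec d j + unitVec d k) ≤ F (x + unitVec d k) := by
              rw [f1]
              refine hC _ (bdd_add d x hx k) k j hij ?_ ?_
              · rw [apply_add_ne d _ hji]; exact hx j
              · rw [apply_add_ne d _ hji, apply_add_self]; omega
            have l2 : F (x + unitVec d k - unitVec d j - unitVec d k) ≤ F (x - unitVec d k) := by
              rw [f2]
              refine hC _ (bdd_sub d x hx k) k j hij ?_ ?_
              · rw [apply_sub_ne d _ hji]; exact hx j
              · rw [apply_sub_ne d _ hji, apply_sub_self]; omega
            omega
          · by_cases hkj : k = j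
            · subst hkj
              have f1 : x + unitVec d i - unitVec d k + unitVec d k
                  = (x + unitVec d k) + unitVec d i - unitVec d k := by abel
              have f2 : x + unitVec d i - unitVec d k - unitVec d k
                  = (x - unitVec d k) + unitVec d i - unitVec d k := by abel
              have l1 : F (x + unitVec d i - unitVec d k + unitVec d k) ≤ F (x + unitVec d k) := by
                rw [f1]
                refine hC _ (bdd_add d x hx k) i k hij ?_ ?_
                · rw [apply_add_self]; have := hx k; omega
                · rw [apply_add_self, apply_add_ne d _ hij]; omega
              have l2 : F (x + unitVec d i - unitVec d k - unitVec d k) ≤ F (x - unitVec d k) := by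
                rw [f2]
                refine hC _ (bdd_sub d x hx k) i k hij ?_ ?_
                · rw [apply_sub_self]; omega
                · rw [apply_sub_self, apply_sub_ne d _ hij]; omega
              omega
            · have hik : i ≠ k := fun hc => hki hc.symm
              have hjk : j ≠ k := fun hc => hkj hc.symm
              have f1 : x + unitVec d i - unitVec d j + unitVec d k
                  = (x + unitVec d k) + unitVec d i - unitVec d j := by abel
              have f2 : x + unitVec d i - unitVec d j - unitVec d k
                  = (x - unitVec d k) + unitVec d i - unitVec d j := by abel
              have l1 : F (x + unitVec d i - unitVec d j + unitVec d k) ≤ F (x + unitVec d k) := by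
                rw [f1]
                refine hC _ (bdd_add d x hx k) i j hij ?_ ?_
                · rw [apply_add_ne d _ hjk]; exact hx j
                · rw [apply_add_ne d _ hjk, apply_add_ne d _ hik]; omega
              have l2 : F (x + unitVec d i - unitVec d j - unitVec d k) ≤ F (x - unitVec d k) := by
                rw [f2]
                refine hC _ (bdd_sub d x hx k) i j hij ?_ ?_
                · rw [apply_sub_ne d _ hjk]; exact hx j
                · rw [apply_sub_ne d _ hjk, apply_sub_ne d _ hik]; omega
              omega
    
end Main

/-! ### The parallel toppling function reaches the odometer -/

lemma exists_stab (hd : 1 ≤ d) (H0 : (Fin d → ℤ) → ℤ) (T : (Fin d → ℤ) → ℕ)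
    (hstab : SandpileStable d (newH d H0 T)) (x : Fin d → ℤ) :
    ∃ N : ℕ, ∀ t, N ≤ t → ptop d H0 t x = ptop d H0 N x := by
  have hmono : Monotone (fun t => ptop d H0 t x) :=
    monotone_nat_of_le_succ (fun t => ptop_mono d hd H0 t x)
  have hbdd : ∀ t, ptop d H0 t x ≤ T x := fun t => ptop_le_odometer d hd H0 T hstab t x
  have hne : (Set.range (fun t => ptop d H0 t x)).Nonempty := ⟨_, ⟨0, rfl⟩⟩
  have hbdd' : BddAbove (Set.range (fun t => ptop d H0 t x)) :=
    ⟨T x, fun v ⟨t, ht⟩ => ht ▸ hbdd t⟩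
  obtain ⟨N, hN⟩ := Nat.sSup_mem hne hbdd'
  change ptop d H0 N x = _ at hN
  refine ⟨N, fun t ht => ?_⟩
  have h1 : ptop d H0 N x ≤ ptop d H0 t x := hmono ht
  have h2 : ptop d H0 t x ≤ sSup (Set.range (fun t => ptop d H0 t x)) :=
    le_csSup hbdd' ⟨t, rfl⟩
  omega

lemma odometer_le_ptop (hd : 1 ≤ d) (H0 : (Fin d → ℤ) → ℤ) (T : (Fin d → ℤ) → ℕ)
    (hT : IsOdometer d H0 T) (z : Fin d → ℤ) :
    ∃ t : ℕ, T z ≤ ptop d H0 t z := by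
  obtain ⟨hfin, hstab, hmin⟩ := hT
  have hex := exists_stab d hd H0 T hstab
  set N : (Fin d → ℤ) → ℕ := fun y => Classical.choose (hex y) with hNdef
  have hNs : ∀ y t, N y ≤ t → ptop d H0 t y = ptop d H0 (N y) y :=
    fun y => Classical.choose_spec (hex y)
  set L : (Fin d → ℤ) → ℕ := fun y => ptop d H0 (N y) y with hLdef
  have hfix : ∀ y, L y = nxt d H0 L y := by
    intro y
    obtain ⟨M, hMy, hMn⟩ : ∃ M : ℕ, N y ≤ M ∧
        ∀ i : Fin d, N (y + unitVec d i) ≤ M ∧ N (y - unitVec d i) ≤ M := by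
      refine ⟨max (N y) (Finset.univ.sup
        (fun i : Fin d => max (N (y + unitVec d i)) (N (y - unitVec d i)))),
        le_max_left _ _, fun i => ⟨?_, ?_⟩⟩
      all_goals {
        have hsup : max (N (y + unitVec d i)) (N (y - unitVec d i)) ≤ Finset.univ.sup
            (fun i : Fin d => max (N (y + unitVec d i)) (N (y - unitVec d i))) :=
          Finset.le_sup (f := fun i : Fin d => max (N (y + unitVec d i)) (N (y - unitVec d i)))
            (Finset.mem_univ i)
        omega }
    have h1 : L y = ptop d H0 (M + 1) y :=
      (hNs y (M + 1) (le_trans hMy (Nat.le_succ M))).symm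
    have h3 : nbrSum d (ptop d H0 M) y = nbrSum d L y := by
      unfold nbrSum
      apply Finset.sum_congr rfl
      intro i _
      rw [hNs (y + unitVec d i) M (hMn i).1, hNs (y - unitVec d i) M (hMn i).2]
    rw [h1]
    show nxt d H0 (ptop d H0 M) y = nxt d H0 L y
    unfold nxt
    rw [h3]
  have hstabL : SandpileStable d (newH d H0 L) := by
    intro y
    have hfy := hfix y
    unfold newH
    have hcast : ∑ i : Fin d, ((L (y + unitVec d i) : ℤ) + (L (y - unitVec d i) : ℤ))
        = ((nbrSum d L y : ℕ) : ℤ) := by unfold nbrSum; push_cast; rfl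
    rw [hcast]
    set a : ℤ := H0 y + (nbrSum d L y : ℤ) with ha
    have h2d : (0:ℤ) < 2*d := by
      have : (1:ℤ) ≤ d := by exact_mod_cast hd
      omega
    have hq : a / (2*(d:ℤ)) ≤ (L y : ℤ) := by
      conv_rhs => rw [hfy]
      unfold nxt
      exact Int.self_le_toNat _
    have hde := Int.mul_ediv_add_emod a (2*(d:ℤ))
    have hmod := Int.emod_lt_of_pos a h2d
    have hq2 : 2*(d:ℤ) * (a / (2*(d:ℤ))) ≤ 2*(d:ℤ) * (L y : ℤ) :=
      mul_le_mul_of_nonneg_left hq (by omega)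
    linarith
  have hsupp : Function.support L ⊆ Function.support T := by
    intro y hy
    have hle : L y ≤ T y := ptop_le_odometer d hd H0 T hstab (N y) y
    simp only [Function.mem_support] at *
    omega
  exact ⟨N z, hmin L (hfin.subset hsupp) hstabL z⟩

/-! ### Classification of next-nearest-neighbor pairs -/

lemma classify {d : ℕ} (f : (Fin d → ℤ) → ℕ) (hQA : QA f) (hQB : QB f) (hQC : QC f)
    (X Z : Fin d → ℤ) (hX : ∀ k, 0 ≤ X k) (hZ : ∀ k, 0 ≤ Z k)
    (hcard : (Finset.univ.filter fun i => X i ≠ Z i).card ≤ 2)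
    (hsum : ∑ i, |X i - Z i| = 2)
    (hdist : ∑ i, (X i)^2 ≤ ∑ i, (Z i)^2) :
    f Z ≤ f X := by
  classical
  set D := Finset.univ.filter (fun i => X i ≠ Z i) with hD
  have hmemD : ∀ k, k ∉ D → X k = Z k := by
    intro k hk
    by_contra hc
    exact hk (Finset.mem_filter.mpr ⟨Finset.mem_univ k, hc⟩)
  have hsumD : ∑ i ∈ D, |X i - Z i| = 2 := by
    rw [← hsum]
    apply Finset.sum_subset (Finset.subset_univ D)
    intro i _ hiD
    rw [hmemD i hiD]
    simp
  have hdistD : 0 ≤ ∑ i ∈ D, ((Z i)^2 - (X i)^2) := by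
    have he : ∑ i ∈ D, ((Z i)^2 - (X i)^2) = ∑ i : Fin d, ((Z i)^2 - (X i)^2) :=
      Finset.sum_subset (Finset.subset_univ D)
        (fun i _ hiD => by rw [hmemD i hiD]; ring)
    rw [he, Finset.sum_sub_distrib]
    omega
  have hcc : D.card = 0 ∨ D.card = 1 ∨ D.card = 2 := by omega
  rcases hcc with h0 | h1 | h2
  · rw [Finset.card_eq_zero] at h0
    rw [h0] at hsumD
    simp at hsumD
  · obtain ⟨i, hi⟩ := Finset.card_eq_one.mp h1
    have hsum_i : |X i - Z i| = 2 := by rw [hi, Finset.sum_singleton] at hsumD; exact hsumD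
    have hdist_i : 0 ≤ (Z i)^2 - (X i)^2 := by
      rw [hi, Finset.sum_singleton] at hdistD; exact hdistD
    have hZi : Z i = X i + 2 := by
      rcases (abs_eq (by norm_num : (0:ℤ) ≤ 2)).mp hsum_i with hc | hc
      · exfalso
        have hXi : X i = Z i + 2 := by omega
        have : (X i)^2 = (Z i)^2 + 4 * Z i + 4 := by rw [hXi]; ring
        have := hZ i
        linarith
      · omega
    have hZeq : Z = X + unitVec d i + unitVec d i := by
      funext k
      by_cases hk : k = i
      · subst hk; rw [apply_add_self, apply_add_self]; omega
      · rw [apply_add_ne d _ hk, apply_add_ne d _ hk]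
        exact (hmemD k (by rw [hi]; simp [hk])).symm
    rw [hZeq]
    exact hQA X hX i
  · obtain ⟨i, j, hij, hD2⟩ := Finset.card_eq_two.mp h2
    have hji : j ≠ i := fun hc => hij hc.symm
    have hiD : i ∈ D := by rw [hD2]; simp
    have hjD : j ∈ D := by rw [hD2]; simp
    have hsum2 : |X i - Z i| + |X j - Z j| = 2 := by
      rw [hD2, Finset.sum_pair hij] at hsumD; exact hsumD
    have hdist2 : 0 ≤ ((Z i)^2 - (X i)^2) + ((Z j)^2 - (X j)^2) := by
      rw [hD2, Finset.sum_pair hij] at hdistD; exact hdistD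
    have hXiZ : X i ≠ Z i := (Finset.mem_filter.mp hiD).2
    have hXjZ : X j ≠ Z j := (Finset.mem_filter.mp hjD).2
    have habsi : 1 ≤ |X i - Z i| := Int.one_le_abs (by omega)
    have habsj : 1 ≤ |X j - Z j| := Int.one_le_abs (by omega)
    have h1i : |X i - Z i| = 1 := by omega
    have h1j : |X j - Z j| = 1 := by omega
    have hoff : ∀ k, k ≠ i → k ≠ j → X k = Z k := by
      intro k hki hkj
      exact hmemD k (by rw [hD2]; simp [hki, hkj])
    rcases (abs_eq (by norm_num : (0:ℤ) ≤ 1)).mp h1i with hci | hci <;>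
      rcases (abs_eq (by norm_num : (0:ℤ) ≤ 1)).mp h1j with hcj | hcj
    · -- Z i = X i - 1, Z j = X j - 1 : impossible by distance
      exfalso
      have e1 : (Z i)^2 = (X i)^2 - 2 * X i + 1 := by
        have : Z i = X i - 1 := by omega
        rw [this]; ring
      have e2 : (Z j)^2 = (X j)^2 - 2 * X j + 1 := by
        have : Z j = X j - 1 := by omega
        rw [this]; ring
      have := hZ i
      have := hZ j
      linarith
    · -- Z i = X i - 1, Z j = X j + 1 : case C with roles (j, i)
      have e1 : (Z i)^2 = (X i)^2 - 2 * X i + 1 := by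
        have : Z i = X i - 1 := by omega
        rw [this]; ring
      have e2 : (Z j)^2 = (X j)^2 + 2 * X j + 1 := by
        have : Z j = X j + 1 := by omega
        rw [this]; ring
      have hineq : X i ≤ X j + 1 := by linarith
      have hZeq : Z = X + unitVec d j - unitVec d i := by
        funext k
        by_cases hki : k = i
        · subst hki; rw [apply_sub_self, apply_add_ne d _ hij]; omega
        · by_cases hkj : k = j
          · subst hkj; rw [apply_sub_ne d _ hji, apply_add_self]
            omega
          · rw [apply_sub_ne d _ hki, apply_add_ne d _ hkj]
            exact (hoff k hki hkj).symm
      rw [hZeq]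
      refine hQC X hX j i hji ?_ ?_
      · have := hZ i; omega
      · omega
    · -- Z i = X i + 1, Z j = X j - 1 : case C with roles (i, j)
      have e1 : (Z i)^2 = (X i)^2 + 2 * X i + 1 := by
        have : Z i = X i + 1 := by omega
        rw [this]; ring
      have e2 : (Z j)^2 = (X j)^2 - 2 * X j + 1 := by
        have : Z j = X j - 1 := by omega
        rw [this]; ring
      have hineq : X j ≤ X i + 1 := by linarith
      have hZeq : Z = X + unitVec d i - unitVec d j := by
        funext k
        by_cases hki : k = i
        · subst hki; rw [apply_sub_ne d _ hij, apply_add_self]; omega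
        · by_cases hkj : k = j
          · subst hkj; rw [apply_sub_self, apply_add_ne d _ hji]; omega
          · rw [apply_sub_ne d _ hkj, apply_add_ne d _ hki]
            exact (hoff k hki hkj).symm
      rw [hZeq]
      refine hQC X hX i j hij ?_ ?_
      · have := hZ j; omega
      · omega
    · -- Z i = X i + 1, Z j = X j + 1 : case B
      have hZeq : Z = X + unitVec d i + unitVec d j := by
        funext k
        by_cases hki : k = i
        · subst hki; rw [apply_add_ne d _ hij, apply_add_self]; omega
        · by_cases hkj : k = j
          · subst hkj; rw [apply_add_self, apply_add_ne d _ hji]; omega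
          · rw [apply_add_ne d _ hkj, apply_add_ne d _ hki]
            exact (hoff k hki hkj).symm
      rw [hZeq]
      exact hQB X hX i j hij

end SandAux

open SandAux

/-- Monotonicity of the sandpile odometer along next-nearest-neighbor pairs: started from `n`
particles at the origin on constant background `h ≤ 2d - 2`, if `x` and `z` lie in the same
parity class, differ in at most two coordinates with `Σ_i ||x_i| − |z_i|| = 2` (next-nearest
neighbors), and `x` is no farther from the origin than `z` in Euclidean distance, then
`T_n(x) ≥ T_n(z)`. -/
theorem odometer_nnn_monotone (d n : ℕ) (hd : 1 ≤ d) (h : ℤ) (hh : h ≤ 2 * d - 2)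
    (T : (Fin d → ℤ) → ℕ) (hT : IsOdometer d (initH d n h) T)
    (x z : Fin d → ℤ)
    (hparity : (∑ i, x i) % 2 = (∑ i, z i) % 2)
    (hcoord : (Finset.univ.filter fun i => x i ≠ z i).card ≤ 2)
    (hnnn : ∑ i, |(|x i| - |z i|)| = 2)
    (hdist : ∑ i, (x i) ^ 2 ≤ ∑ i, (z i) ^ 2) :
    T z ≤ T x := by
  classical
  by_cases hsmall : (n:ℤ) ≤ 2 * d - 1
  · -- already stable: T ≡ 0
    have hstab0 : SandpileStable d (newH d (initH d n h) (fun _ => 0)) := by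
      intro y
      have he : newH d (initH d n h) (fun _ => 0) y = initH d n h y := by
        unfold newH; simp
      rw [he]
      unfold initH
      have hd' : (1:ℤ) ≤ d := by exact_mod_cast hd
      split_ifs
      · exact hsmall
      · omega
    have hsupp0 : (Function.support (fun _ : Fin d → ℤ => (0:ℕ))).Finite := by
      have : Function.support (fun _ : Fin d → ℤ => (0:ℕ)) = ∅ := by
        simp [Function.support]
      rw [this]; exact Set.finite_empty
    have hT0 : T z ≤ 0 := hT.2.2 (fun _ => 0) hsupp0 hstab0 z
    omega
  · have hd' : (1:ℤ) ≤ d := by exact_mod_cast hd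
    have hn : h ≤ (n:ℤ) := by omega
    obtain ⟨t0, ht0⟩ := odometer_le_ptop d hd (initH d n h) T hT z
    -- normalize to absolute values
    have habs : ∀ w : Fin d → ℤ, ∀ t : ℕ,
        ptop d (initH d n h) t w = ptop d (initH d n h) t (fun k => |w k|) := by
      intro w t
      have hkey : negAt d (Finset.univ.filter (fun k => w k < 0)) (fun k => |w k|) = w := by
        funext k
        simp only [negAt, Finset.mem_filter, Finset.mem_univ, true_and]
        split_ifs with hk
        · rw [abs_of_neg hk]; ring
        · rw [abs_of_nonneg (by omega)]
      conv_lhs => rw [← hkey]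
      rw [ptop_negAt d (initH d n h) (fun s x => initH_negAt s x) t]
    have hinv := fun t : ℕ => invariant (d := d) (n := n) (h := h) hd hn t
    have hZX : ∀ t : ℕ, ptop d (initH d n h) t (fun k => |z k|)
        ≤ ptop d (initH d n h) t (fun k => |x k|) := by
      intro t
      refine classify _ (hinv t).1 (hinv t).2.1 (hinv t).2.2 _ _
        (fun k => abs_nonneg (x k)) (fun k => abs_nonneg (z k)) ?_ ?_ ?_
      · refine le_trans (Finset.card_le_card ?_) hcoord
        intro i hi
        simp only [Finset.mem_filter, Finset.mem_univ, true_and] at *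
        intro hc
        exact hi (by rw [hc])
      · exact hnnn
      · have e1 : ∑ i, |x i| ^ 2 = ∑ i, (x i) ^ 2 :=
          Finset.sum_congr rfl (fun i _ => sq_abs (x i))
        have e2 : ∑ i, |z i| ^ 2 = ∑ i, (z i) ^ 2 :=
          Finset.sum_congr rfl (fun i _ => sq_abs (z i))
        omega
    calc T z ≤ ptop d (initH d n h) t0 z := ht0
      _ = ptop d (initH d n h) t0 (fun k => |z k|) := habs z t0
      _ ≤ ptop d (initH d n h) t0 (fun k => |x k|) := hZX t0
      _ = ptop d (initH d n h) t0 x := (habs x t0).symm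
      _ ≤ T x := ptop_le_odometer d hd (initH d n h) T hT.2.1 t0 x
end

section
/- In the abelian sandpile model on Z^d with n particles at the origin and background h ≤ 2d-2, there exists r_n such that the toppling cluster T_n satisfies D(r_n − 1) ⊆ T_n ⊆ C(r_n), where D is the discrete diamond and C the discrete cube. -/
/-!
Let `T` be the odometer. If a lattice isometry `ρ` fixes pointwise the boundary of a half-space
`P` that does not contain the origin in its interior, then `min T (T ∘ ρ)` on `P` (and `T`
elsewhere) is again a toppling function with stable result, so by the least action principle
`T ≤ T ∘ ρ` on `P`. Applied to the reflections in the hyperplanes `zᵢ = m` and `zᵢ - zⱼ = c`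
this shows that `T` is invariant under sign changes of coordinates and, on the positive orthant,
does not decrease under the moves `z ↦ z - eᵢ - eⱼ` (when `zᵢ + zⱼ ≥ 1`) and
`z ↦ z - eᵢ + eⱼ` (when `zⱼ < zᵢ`). Chaining these moves, `T z ≤ T y` whenever
`‖y‖₁ ≤ |z k|` and `∑ z ≡ ∑ y (mod 2)`.

Now let `r` be the largest `|a k|` over toppled sites `a`; this gives the cube. A site `a ≠ 0`
that topples started with at most `2d - 2` grains and ends with a nonnegative number, so it has a
toppled neighbour `b`, of the other parity and with `|b k| ≥ r - 1`. One of `a`, `b` then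
dominates any `x` with `‖x‖₁ ≤ r - 1`, so `x` topples.
-/

open Finset Function

section

variable {d : ℕ}

lemma unitVec_apply (i j : Fin d) : unitVec d i j = if j = i then 1 else 0 := rfl

lemma sum_unitVec (i : Fin d) : ∑ j, unitVec d i j = 1 := by
  simp [unitVec_apply]

lemma sum_abs_unitVec (i : Fin d) : ∑ j, |unitVec d i j| = 1 := by
  simp [unitVec_apply, apply_ite]

lemma sum_add_unitVec (z : Fin d → ℤ) (i : Fin d) : ∑ j, (z + unitVec d i) j = ∑ j, z j + 1 := by
  simp [sum_add_distrib, sum_unitVec]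

lemma sum_sub_unitVec (z : Fin d → ℤ) (i : Fin d) : ∑ j, (z - unitVec d i) j = ∑ j, z j - 1 := by
  simp [sum_sub_distrib, sum_unitVec]

lemma smul_unitVec_apply (s : ℤ) (k i : Fin d) :
    (s • unitVec d k) i = if i = k then s else 0 := by
  simp [unitVec_apply]

lemma sum_smul_unitVec (s : ℤ) (k : Fin d) : ∑ i, (s • unitVec d k) i = s := by
  simp only [smul_unitVec_apply, sum_ite_eq', mem_univ, if_true]

lemma eq_of_le_of_sum_eq {w z : Fin d → ℤ} (hwz : w ≤ z) (h : ∑ i, w i = ∑ i, z i) : w = z :=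
  funext fun i => (sum_eq_sum_iff_of_le fun i _ => hwz i).1 h i (mem_univ i)

lemma exists_add_unitVec_le {w z : Fin d → ℤ} (hwz : w ≤ z) (hlt : ∑ i, w i < ∑ i, z i) :
    ∃ i, w + unitVec d i ≤ z := by
  obtain ⟨i, -, hi⟩ := exists_lt_of_sum_lt hlt
  refine ⟨i, fun x => ?_⟩
  have : w x ≤ z x := hwz x
  simp only [Pi.add_apply, unitVec_apply]
  split_ifs with hx
  · subst hx; omega
  · omega

lemma even_sum_abs_sub_sum (z : Fin d → ℤ) : Even (∑ i, |z i| - ∑ i, z i) := by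
  rw [← sum_sub_distrib]
  exact even_sum _ fun i _ => Int.even_sub.2 even_abs

lemma odd_sum_sub_of_sum_abs_sub_eq_one {x y : Fin d → ℤ} (h : ∑ i, |y i - x i| = 1) :
    Odd (∑ i, y i - ∑ i, x i) := by
  have := even_sum_abs_sub_sum (y - x)
  simp only [Pi.sub_apply, h, sum_sub_distrib] at this
  exact (Int.even_sub'.1 this).1 odd_one

lemma exists_max_abs_apply {S : Set (Fin d → ℤ)} (hS : S.Finite) :
    ∃ r : ℕ, (∀ x ∈ S, ∀ i, |x i| ≤ r) ∧ (0 < r → ∃ a ∈ S, ∃ k, |a k| = r) := by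
  classical
  set F := hS.toFinset ×ˢ (univ : Finset (Fin d))
  set f : (Fin d → ℤ) × Fin d → ℕ := fun p => (p.1 p.2).natAbs
  refine ⟨F.sup f, fun x hx i => ?_, fun hr => ?_⟩
  · rw [← Int.natCast_natAbs]
    exact_mod_cast le_sup (f := f) (b := (x, i)) (mem_product.2 ⟨hS.mem_toFinset.2 hx, mem_univ i⟩)
  · have hF : F.Nonempty := nonempty_iff_ne_empty.2 fun hF => by simp [hF] at hr
    obtain ⟨⟨a, k⟩, hp, hak⟩ := exists_mem_eq_sup F hF f
    exact ⟨a, hS.mem_toFinset.1 (mem_product.1 hp).1, k, by rw [hak, Int.natCast_natAbs]⟩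

def nbrSum (d : ℕ) (T : (Fin d → ℤ) → ℕ) (x : Fin d → ℤ) : ℤ :=
  ∑ i : Fin d, ((T (x + unitVec d i) : ℤ) + (T (x - unitVec d i) : ℤ))

lemma newH_eq (H0 : (Fin d → ℤ) → ℤ) (T : (Fin d → ℤ) → ℕ) (x : Fin d → ℤ) :
    newH d H0 T x = H0 x - 2 * d * T x + nbrSum d T x := rfl

lemma nbrSum_mono {T T' : (Fin d → ℤ) → ℕ} {x : Fin d → ℤ}
    (hadd : ∀ i, T' (x + unitVec d i) ≤ T (x + unitVec d i))
    (hsub : ∀ i, T' (x - unitVec d i) ≤ T (x - unitVec d i)) :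
    nbrSum d T' x ≤ nbrSum d T x :=
  sum_le_sum fun i _ => by have := hadd i; have := hsub i; omega

lemma newH_le_newH_add {H0 : (Fin d → ℤ) → ℤ} {T T' : (Fin d → ℤ) → ℕ}
    (hle : ∀ y, T' y ≤ T y) (x : Fin d → ℤ) :
    newH d H0 T' x ≤ newH d H0 T x + 2 * d * ((T x : ℤ) - T' x) := by
  have := nbrSum_mono (x := x) (fun i => hle _) (fun i => hle _)
  rw [newH_eq, newH_eq]
  linarith

def PreservesNbrs (ρ : (Fin d → ℤ) → Fin d → ℤ) : Prop :=
  ∃ σ : Equiv.Perm (Fin d), ∀ z t,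
    (ρ (z + unitVec d t) = ρ z + unitVec d (σ t) ∧ ρ (z - unitVec d t) = ρ z - unitVec d (σ t)) ∨
    (ρ (z + unitVec d t) = ρ z - unitVec d (σ t) ∧ ρ (z - unitVec d t) = ρ z + unitVec d (σ t))

lemma PreservesNbrs.nbrSum_comp {ρ : (Fin d → ℤ) → Fin d → ℤ} (hρ : PreservesNbrs ρ)
    (T : (Fin d → ℤ) → ℕ) (z : Fin d → ℤ) : nbrSum d (T ∘ ρ) z = nbrSum d T (ρ z) := by
  obtain ⟨σ, hσ⟩ := hρ
  refine Fintype.sum_equiv σ _ _ fun t => ?_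
  rcases hσ z t with ⟨hadd, hsub⟩ | ⟨hadd, hsub⟩
  · simp only [comp_apply, hadd, hsub]
  · simp only [comp_apply, hadd, hsub, add_comm]

def reflectCoord (i : Fin d) (m : ℤ) (z : Fin d → ℤ) : Fin d → ℤ := update z i (2 * m - z i)

/-- Reflection in the hyperplane `z i - z j = c`. -/
def reflectDiag (i j : Fin d) (c : ℤ) (z : Fin d → ℤ) : Fin d → ℤ :=
  update (update z i (z j + c)) j (z i - c)

lemma reflectCoord_reflectCoord (i : Fin d) (m : ℤ) (z : Fin d → ℤ) :
    reflectCoord i m (reflectCoord i m z) = z := by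
  simp [reflectCoord]

lemma reflectCoord_eq_self {i : Fin d} {m : ℤ} {z : Fin d → ℤ} (hz : z i = m) :
    reflectCoord i m z = z := by
  rw [reflectCoord, show 2 * m - z i = z i by omega, update_eq_self]

lemma reflectDiag_eq_self {i j : Fin d} {c : ℤ} {z : Fin d → ℤ} (hz : z i - z j = c) :
    reflectDiag i j c z = z := by
  rw [reflectDiag, show z j + c = z i by omega, update_eq_self, show z i - c = z j by omega,
    update_eq_self]

lemma preservesNbrs_reflectCoord (i : Fin d) (m : ℤ) : PreservesNbrs (reflectCoord i m) := by
  refine ⟨1, fun z t => ?_⟩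
  rcases eq_or_ne t i with rfl | hti
  · refine Or.inr ⟨funext fun x => ?_, funext fun x => ?_⟩ <;>
      simp only [reflectCoord, update_apply, unitVec_apply, Pi.add_apply, Pi.sub_apply,
        Equiv.Perm.coe_one, id_eq] <;> split_ifs <;> omega
  · refine Or.inl ⟨funext fun x => ?_, funext fun x => ?_⟩ <;>
      simp only [reflectCoord, update_apply, unitVec_apply, Pi.add_apply, Pi.sub_apply,
        Equiv.Perm.coe_one, id_eq] <;> split_ifs <;> subst_vars <;> omega

lemma preservesNbrs_reflectDiag {i j : Fin d} (hij : i ≠ j) (c : ℤ) :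
    PreservesNbrs (reflectDiag i j c) := by
  refine ⟨Equiv.swap i j, fun z t => Or.inl ⟨funext fun x => ?_, funext fun x => ?_⟩⟩ <;>
    simp only [reflectDiag, update_apply, unitVec_apply, Pi.add_apply, Pi.sub_apply,
      Equiv.swap_apply_def] <;>
    split_ifs <;> subst_vars <;> omega

lemma initH_le_initH {n : ℕ} {h : ℤ} (hhn : h ≤ n) {z w : Fin d → ℤ} (hzw : z = 0 → w = 0) :
    initH d n h z ≤ initH d n h w := by
  by_cases hz : z = 0
  · rw [hzw hz, hz]
  · simp only [initH, hz, if_false]; split_ifs <;> omega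

namespace IsOdometer

variable {H0 : (Fin d → ℤ) → ℤ} {n : ℕ} {h : ℤ} {T : (Fin d → ℤ) → ℕ}

theorem eq_of_le_of_stable (hT : IsOdometer d H0 T) {T' : (Fin d → ℤ) → ℕ}
    (hle : ∀ x, T' x ≤ T x) (hst : SandpileStable d (newH d H0 T')) : T' = T :=
  funext fun x => (hle x).antisymm <|
    hT.2.2 T' (hT.1.subset fun y (hy : T' y ≠ 0) => by have := hle y; show T y ≠ 0; omega) hst x

theorem eq_zero_of_stable (hT : IsOdometer d H0 T) (hH0 : SandpileStable d H0) : T = 0 :=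
  (hT.eq_of_le_of_stable (fun _ => Nat.zero_le _) (by simpa [SandpileStable, newH] using hH0)).symm

theorem newH_nonneg (hT : IsOdometer d H0 T) {x : Fin d → ℤ} (hx : 0 < T x) :
    0 ≤ newH d H0 T x := by
  classical
  by_contra! hneg
  set T' := update T x (T x - 1)
  have hle : ∀ y, T' y ≤ T y := fun y => by
    rcases eq_or_ne y x with rfl | hy
    · simp [T']
    · simp [T', hy]
  have hst : SandpileStable d (newH d H0 T') := fun y => by
    have := newH_le_newH_add (H0 := H0) hle y
    have := hT.2.1 y
    rcases eq_or_ne y x with rfl | hy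
    · simp only [T', update_self] at this ⊢
      push_cast [Nat.one_le_iff_ne_zero.mpr hx.ne'] at *
      linarith
    · simp only [T', update_of_ne hy] at *
      linarith
  have := congrFun (hT.eq_of_le_of_stable hle hst) x
  simp only [update_self, T'] at this
  omega

theorem exists_pos_neighbour (hT : IsOdometer d H0 T) {x : Fin d → ℤ}
    (hH0 : H0 x ≤ 2 * d - 2) (hx : 0 < T x) : ∃ y, 0 < T y ∧ ∑ i, |y i - x i| = 1 := by
  have hnn := hT.newH_nonneg hx
  rw [newH_eq] at hnn
  have : (2 * d : ℤ) ≤ 2 * d * T x := le_mul_of_one_le_right (by positivity) (by exact_mod_cast hx)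
  obtain ⟨i, -, hi⟩ : ∃ i ∈ univ, (0 : ℤ) < T (x + unitVec d i) + T (x - unitVec d i) :=
    exists_lt_of_sum_lt (by rw [sum_const_zero]; unfold nbrSum at hnn; linarith)
  by_cases hadd : 0 < T (x + unitVec d i)
  · exact ⟨_, hadd, by simp [sum_abs_unitVec]⟩
  · exact ⟨x - unitVec d i, by omega, by simp [sum_abs_unitVec]⟩

theorem le_comp_of_preservesNbrs (hT : IsOdometer d H0 T) {ρ : (Fin d → ℤ) → Fin d → ℤ}
    (hρ : PreservesNbrs ρ) {P : (Fin d → ℤ) → Prop} (hH0 : ∀ z, P z → H0 z ≤ H0 (ρ z))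
    (hP : ∀ z, P z → ρ z ≠ z → ∀ i, P (z + unitVec d i) ∧ P (z - unitVec d i))
    {z : Fin d → ℤ} (hz : P z) : T z ≤ T (ρ z) := by
  classical
  set T' : (Fin d → ℤ) → ℕ := fun w => if P w then min (T w) (T (ρ w)) else T w
  have hle : ∀ w, T' w ≤ T w := fun w => by
    by_cases hw : P w <;> simp [T', hw]
  have hle_comp : ∀ w, P w → T' w ≤ T (ρ w) := fun w hw => by simp [T', hw]
  have hst : SandpileStable d (newH d H0 T') := fun w => by
    by_cases hw : P w ∧ T (ρ w) < T w
    · obtain ⟨hPw, hlt⟩ := hw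
      have hne : ρ w ≠ w := fun e => (e ▸ hlt).false
      have hT'w : T' w = T (ρ w) := by simp [T', hPw, hlt.le]
      have hnbr : nbrSum d T' w ≤ nbrSum d (T ∘ ρ) w :=
        nbrSum_mono (fun i => hle_comp _ (hP w hPw hne i).1)
          (fun i => hle_comp _ (hP w hPw hne i).2)
      calc newH d H0 T' w ≤ H0 (ρ w) - 2 * d * T (ρ w) + nbrSum d (T ∘ ρ) w := by
            rw [newH_eq, hT'w]; linarith [hH0 w hPw]
        _ = newH d H0 T (ρ w) := by rw [hρ.nbrSum_comp, newH_eq]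
        _ ≤ 2 * d - 1 := hT.2.1 _
    · have hT'w : T' w = T w := by
        by_cases hPw : P w
        · simp only [T', hPw, if_true]; exact min_eq_left (not_lt.mp fun h => hw ⟨hPw, h⟩)
        · simp [T', hPw]
      have := newH_le_newH_add (H0 := H0) hle w
      rw [hT'w, sub_self, mul_zero, add_zero] at this
      exact this.trans (hT.2.1 w)
  rw [← congrFun (hT.eq_of_le_of_stable hle hst) z]
  exact hle_comp z hz

theorem background_le_of_pos (hT : IsOdometer d (initH d n h) T) (hh : h ≤ 2 * d - 2)
    {a : Fin d → ℤ} (ha : 0 < T a) : h ≤ n := by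
  by_contra! hn
  have : SandpileStable d (initH d n h) := fun x => by unfold initH; split_ifs <;> omega
  simp [hT.eq_zero_of_stable this] at ha

theorem le_reflectCoord (hT : IsOdometer d (initH d n h) T) (hhn : h ≤ n) {i : Fin d} {m : ℤ}
    (hm : 0 ≤ m) {z : Fin d → ℤ} (hz : m ≤ z i) : T z ≤ T (reflectCoord i m z) := by
  refine hT.le_comp_of_preservesNbrs (preservesNbrs_reflectCoord i m) (P := fun z => m ≤ z i)
    (fun z hz => initH_le_initH hhn fun hz0 => ?_) (fun z hz hne t => ?_) hz
  · subst hz0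
    rw [reflectCoord_eq_self (by simp only [Pi.zero_apply] at hz ⊢; omega)]
  · have : z i ≠ m := fun e => hne (reflectCoord_eq_self e)
    constructor <;> simp only [Pi.add_apply, Pi.sub_apply, unitVec_apply] <;> split_ifs <;> omega

theorem le_reflectDiag (hT : IsOdometer d (initH d n h) T) (hhn : h ≤ n) {i j : Fin d}
    (hij : i ≠ j) {c : ℤ} (hc : 0 ≤ c) {z : Fin d → ℤ} (hz : c ≤ z i - z j) :
    T z ≤ T (reflectDiag i j c z) := by
  refine hT.le_comp_of_preservesNbrs (preservesNbrs_reflectDiag hij c)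
    (P := fun z => c ≤ z i - z j) (fun z hz => initH_le_initH hhn fun hz0 => ?_)
    (fun z hz hne t => ?_) hz
  · subst hz0
    rw [reflectDiag_eq_self (by simp only [Pi.zero_apply, sub_self] at hz ⊢; omega)]
  · have : z i - z j ≠ c := fun e => hne (reflectDiag_eq_self e)
    constructor <;> simp only [Pi.add_apply, Pi.sub_apply, unitVec_apply] <;> split_ifs <;> omega

theorem apply_reflectCoord_zero (hT : IsOdometer d (initH d n h) T) (hhn : h ≤ n) (i : Fin d)
    (z : Fin d → ℤ) : T (reflectCoord i 0 z) = T z := by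
  have hle : ∀ z, T z ≤ T (reflectCoord i 0 z) := fun z =>
    hT.le_comp_of_preservesNbrs (preservesNbrs_reflectCoord i 0) (P := fun _ => True)
      (fun z _ => initH_le_initH hhn fun hz0 => by simp [hz0, reflectCoord])
      (fun _ _ _ _ => ⟨trivial, trivial⟩) trivial
  refine le_antisymm ?_ (hle z)
  simpa only [reflectCoord_reflectCoord] using hle (reflectCoord i 0 z)

theorem apply_abs (hT : IsOdometer d (initH d n h) T) (hhn : h ≤ n) (z : Fin d → ℤ) :
    T |z| = T z := by
  classical
  have hupdate : ∀ (w : Fin d → ℤ) j, T (update w j |w j|) = T w := fun w j => by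
    rcases abs_choice (w j) with hw | hw
    · rw [hw, update_eq_self]
    · rw [hw, ← hT.apply_reflectCoord_zero hhn j w, reflectCoord, mul_zero, zero_sub]
  suffices ∀ s : Finset (Fin d), T (s.piecewise |z| z) = T z by simpa using this univ
  intro s
  induction s using Finset.induction_on with
  | empty => simp
  | insert j s hj ih =>
    rw [piecewise_insert, Pi.abs_apply, ← piecewise_eq_of_notMem s |z| z hj, hupdate, ih]

theorem le_sub_unitVec_add_unitVec (hT : IsOdometer d (initH d n h) T) (hhn : h ≤ n)
    {i j : Fin d} {z : Fin d → ℤ} (hz : z j < z i) :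
    T z ≤ T (z - unitVec d i + unitVec d j) := by
  have hij : i ≠ j := fun e => by subst e; omega
  have hρ : reflectDiag i j (z i - z j - 1) z = z - unitVec d i + unitVec d j := by
    funext x
    simp only [reflectDiag, update_apply, unitVec_apply, Pi.add_apply, Pi.sub_apply]
    split_ifs <;> subst_vars <;> omega
  exact hρ ▸ hT.le_reflectDiag hhn hij (by omega) (by omega)

theorem le_sub_unitVec_sub_unitVec (hT : IsOdometer d (initH d n h) T) (hhn : h ≤ n)
    {i j : Fin d} {z : Fin d → ℤ} (hz : 1 ≤ z i + z j) :
    T z ≤ T (z - unitVec d i - unitVec d j) := by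
  rcases eq_or_ne i j with rfl | hij
  · have hρ : reflectCoord i (z i - 1) z = z - unitVec d i - unitVec d i := by
      funext x
      simp only [reflectCoord, update_apply, unitVec_apply, Pi.sub_apply]
      split_ifs <;> subst_vars <;> omega
    exact hρ ▸ hT.le_reflectCoord hhn (by omega) (by omega)
  -- the mirror `zᵢ + zⱼ = c` is the mirror `zᵢ - zⱼ = c` conjugated by the sign change of `zⱼ`
  set w := reflectCoord j 0 z with hw
  have hwij : w j < w i := by
    simp only [hw, reflectCoord, update_self, update_of_ne hij]; omega
  have hρ : reflectCoord j 0 (w - unitVec d i + unitVec d j) = z - unitVec d i - unitVec d j := by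
    funext x
    simp only [hw, reflectCoord, update_apply, unitVec_apply, Pi.add_apply, Pi.sub_apply]
    split_ifs <;> subst_vars <;> omega
  calc T z = T w := (hT.apply_reflectCoord_zero hhn j z).symm
    _ ≤ T (w - unitVec d i + unitVec d j) := hT.le_sub_unitVec_add_unitVec hhn hwij
    _ = T (z - unitVec d i - unitVec d j) := by rw [← hρ, hT.apply_reflectCoord_zero hhn]

theorem smul_unitVec_le_smul_unitVec (hT : IsOdometer d (initH d n h) T) (hhn : h ≤ n)
    {s : ℤ} (hs : 0 ≤ s) (i j : Fin d) : T (s • unitVec d i) ≤ T (s • unitVec d j) := by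
  rcases eq_or_ne i j with rfl | hij
  · exact le_rfl
  have hρ : reflectDiag i j 0 (s • unitVec d i) = s • unitVec d j := by
    funext x
    simp only [reflectDiag, update_apply, unitVec_apply, Pi.smul_apply, smul_eq_mul]
    split_ifs <;> subst_vars <;> simp_all
  exact hρ ▸ hT.le_reflectDiag hhn hij le_rfl (by simp [unitVec_apply, Ne.symm hij, hs])

theorem le_of_le_of_even_sum_sub (hT : IsOdometer d (initH d n h) T) (hhn : h ≤ n)
    {w z : Fin d → ℤ} (hw : 0 ≤ w) (hwz : w ≤ z) (hpar : Even (∑ i, z i - ∑ i, w i)) :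
    T z ≤ T w := by
  obtain ⟨u, hu⟩ : ∃ u : ℕ, ∑ i, z i - ∑ i, w i = 2 * u := by
    obtain ⟨u, hu⟩ := hpar
    have : ∑ i, w i ≤ ∑ i, z i := sum_le_sum fun i _ => hwz i
    exact ⟨u.toNat, by omega⟩
  clear hpar
  induction u generalizing z with
  | zero =>
    exact (congrArg T (eq_of_le_of_sum_eq hwz (by omega))).ge
  | succ u ih =>
    obtain ⟨i, hi⟩ := exists_add_unitVec_le hwz (by push_cast at hu; omega)
    obtain ⟨j, hj⟩ := exists_add_unitVec_le hi (by rw [sum_add_unitVec]; push_cast at hu; omega)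
    have hwi : w i + 1 ≤ z i := by simpa [unitVec_apply] using hi i
    have hwj : w j + 1 ≤ z j := by
      have := hj j
      simp only [Pi.add_apply, unitVec_apply, if_true] at this
      split_ifs at this <;> omega
    have : 0 ≤ w i := hw i
    have : 0 ≤ w j := hw j
    refine (hT.le_sub_unitVec_sub_unitVec hhn (i := i) (j := j) (by omega)).trans (ih ?_ ?_)
    · intro x
      have := hj x
      simp only [Pi.add_apply, Pi.sub_apply] at this ⊢
      linarith
    · rw [sum_sub_unitVec, sum_sub_unitVec]; push_cast at hu; omega

theorem smul_unitVec_le_of_forall_le (hT : IsOdometer d (initH d n h) T) (hhn : h ≤ n)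
    {y : Fin d → ℤ} (hy : 0 ≤ y) {k : Fin d} (hk : ∀ j, y j ≤ y k) :
    T ((∑ i, y i) • unitVec d k) ≤ T y := by
  have hyk : y k • unitVec d k ≤ y := fun i => by
    rw [smul_unitVec_apply]; split_ifs with hi
    exacts [hi ▸ le_rfl, hy i]
  obtain ⟨m, hm⟩ : ∃ m : ℕ, ∑ i, y i - y k = m :=
    ⟨(∑ i, y i - y k).toNat, by have := single_le_sum (fun i _ => hy i) (mem_univ k); omega⟩
  induction m generalizing y with
  | zero =>
    rw [show ∑ i, y i = y k by omega, eq_of_le_of_sum_eq hyk (by rw [sum_smul_unitVec]; omega)]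
  | succ m ih =>
    -- move one grain from some coordinate `j ≠ k` to the largest coordinate `k`
    obtain ⟨j, hj⟩ := exists_add_unitVec_le hyk (by rw [sum_smul_unitVec]; omega)
    have hjk : j ≠ k := fun e => by subst e; simpa [unitVec_apply] using hj j
    have hyj : 1 ≤ y j := by simpa [unitVec_apply, hjk] using hj j
    set y' := y + unitVec d k - unitVec d j
    have hy'k : y' k = y k + 1 := by simp [y', unitVec_apply, Ne.symm hjk]
    have hy'j : y' j = y j - 1 := by simp [y', unitVec_apply, hjk]
    have hsum' : ∑ i, y' i = ∑ i, y i := by simp only [y', sum_sub_unitVec, sum_add_unitVec]; ring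
    have hstep : T y' ≤ T y := by
      have := hT.le_sub_unitVec_add_unitVec hhn (i := k) (j := j) (z := y')
        (by rw [hy'k, hy'j]; linarith [hk j])
      rwa [show y' - unitVec d k + unitVec d j = y by simp only [y']; abel] at this
    refine le_trans ?_ hstep
    rw [← hsum']
    refine ih (fun x => ?_) (fun x => ?_) (fun x => ?_) (by rw [hsum', hy'k]; push_cast at hm; omega)
    · have : 0 ≤ y x := hy x
      simp only [y', Pi.zero_apply, Pi.add_apply, Pi.sub_apply, unitVec_apply]
      split_ifs <;> subst_vars <;> omega
    · have := hk x
      simp only [y', Pi.add_apply, Pi.sub_apply, unitVec_apply]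
      split_ifs <;> omega
    · have : 0 ≤ y x := hy x
      have := hk x
      simp only [y', smul_unitVec_apply, Pi.add_apply, Pi.sub_apply, unitVec_apply]
      split_ifs <;> subst_vars <;> omega

theorem smul_unitVec_le (hT : IsOdometer d (initH d n h) T) (hhn : h ≤ n) {y : Fin d → ℤ}
    (hy : 0 ≤ y) (k : Fin d) : T ((∑ i, y i) • unitVec d k) ≤ T y := by
  have : Nonempty (Fin d) := ⟨k⟩
  obtain ⟨k', hk'⟩ := Finite.exists_max y
  exact (hT.smul_unitVec_le_smul_unitVec hhn (sum_nonneg fun i _ => hy i) k k').trans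
    (hT.smul_unitVec_le_of_forall_le hhn hy hk')

theorem le_of_sum_abs_le (hT : IsOdometer d (initH d n h) T) (hhn : h ≤ n) {y z : Fin d → ℤ}
    {k : Fin d} (hyz : ∑ i, |y i| ≤ |z k|) (hpar : Even (∑ i, z i - ∑ i, y i)) : T z ≤ T y := by
  set s := ∑ i, |y i| with hs_def
  have hs : 0 ≤ s := sum_nonneg fun i _ => abs_nonneg _
  have hspike : 0 ≤ s • unitVec d k := fun i => by
    rw [smul_unitVec_apply]; split_ifs <;> simp [hs]
  have hspike_le : s • unitVec d k ≤ |z| := fun i => by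
    rw [smul_unitVec_apply]; split_ifs with hi
    exacts [hi ▸ hyz, abs_nonneg _]
  have hpar' : Even (∑ i, |z| i - ∑ i, (s • unitVec d k) i) := by
    simp only [Pi.abs_apply]
    rw [sum_smul_unitVec, hs_def, show ∑ i, |z i| - ∑ i, |y i| =
      (∑ i, |z i| - ∑ i, z i) + (∑ i, z i - ∑ i, y i) - (∑ i, |y i| - ∑ i, y i) by ring]
    exact ((even_sum_abs_sub_sum z).add hpar).sub (even_sum_abs_sub_sum y)
  calc T z = T |z| := (hT.apply_abs hhn z).symm
    _ ≤ T (s • unitVec d k) := hT.le_of_le_of_even_sum_sub hhn hspike hspike_le hpar'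
    _ ≤ T |y| := by simpa [s] using hT.smul_unitVec_le hhn (abs_nonneg y) k
    _ = T y := hT.apply_abs hhn y

end IsOdometer

end

theorem toppling_cluster_diamond_cube_general (d n : ℕ) (h : ℤ) (hh : h ≤ 2 * d - 2)
    (T : (Fin d → ℤ) → ℕ) (hT : IsOdometer d (initH d n h) T) :
    ∃ r : ℕ, (∀ x : Fin d → ℤ, ∑ i, |x i| ≤ (r : ℤ) - 1 → 0 < T x) ∧
      (∀ x : Fin d → ℤ, 0 < T x → ∀ i, |x i| ≤ (r : ℤ)) := by
  obtain ⟨r, hcube, hmax⟩ := exists_max_abs_apply hT.1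
  refine ⟨r, fun x hx => ?_, fun x hx => hcube x hx.ne'⟩
  have : 0 ≤ ∑ i, |x i| := sum_nonneg fun i _ => abs_nonneg (x i)
  obtain ⟨a, ha, k, hak⟩ := hmax (by omega)
  have haT : 0 < T a := Nat.pos_of_ne_zero ha
  have hhn : h ≤ n := hT.background_le_of_pos hh haT
  have ha0 : a ≠ 0 := fun h0 => by simp only [h0, Pi.zero_apply, abs_zero] at hak; omega
  obtain ⟨b, hbT, hab⟩ := hT.exists_pos_neighbour (by simpa [initH, ha0] using hh) haT
  have hbk : |a k| - 1 ≤ |b k| := by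
    have := single_le_sum (fun i _ => abs_nonneg (b i - a i)) (mem_univ k)
    have := abs_sub_abs_le_abs_sub (a k) (b k)
    rw [abs_sub_comm] at this
    linarith
  rcases Int.even_or_odd (∑ i, a i - ∑ i, x i) with hpar | hpar
  · exact haT.trans_le (hT.le_of_sum_abs_le hhn (k := k) (by omega) hpar)
  · refine hbT.trans_le (hT.le_of_sum_abs_le hhn (k := k) (by omega) ?_)
    have := (odd_sum_sub_of_sum_abs_sub_eq_one hab).add_odd hpar
    rwa [sub_add_sub_cancel] at this

/-- In the abelian sandpile model on `ℤ^d` with `n` particles at the origin and background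
`h ≤ 2d - 2`, there exists `r_n` such that the toppling cluster `T_n` (the set of sites that
topple at least once) satisfies `D(r_n − 1) ⊆ T_n ⊆ C(r_n)`, where `D` is the discrete
diamond and `C` the discrete cube. -/
theorem toppling_cluster_diamond_cube (d n : ℕ) (hd : 1 ≤ d) (h : ℤ) (hh : h ≤ 2 * d - 2)
    (T : (Fin d → ℤ) → ℕ) (hT : IsOdometer d (initH d n h) T) :
    ∃ r : ℕ, (∀ x : Fin d → ℤ, ∑ i, |x i| ≤ (r : ℤ) - 1 → 0 < T x) ∧
      (∀ x : Fin d → ℤ, 0 < T x → ∀ i, |x i| ≤ (r : ℤ)) :=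
  toppling_cluster_diamond_cube_general d n h hh T hT
end

section
/- If the toppling function T : Z^d → N of the final sandpile configuration satisfies T(z) ≤ T(z') for every next-nearest-neighbor pair z, z' in the same parity class with d(z') ≤ d(z), and the support of T is path connected and invariant under coordinate permutations and sign changes, then the support of T is simply connected (contains no holes): there is no site y with T(y) > 0 having a neighbor x with T(x) = 0 that is strictly closer to the origin than y and than all neighbors of y with positive T. -/
/-!
Let `x` be the emptied neighbour of `y`; it is a step from `y` towards the origin in some
coordinate `k`. Every other neighbour `z` of `y` is a next-nearest neighbour of `x` in the same
parity class, and if `T z > 0` then `z` is farther from the origin than `x`, so monotonicity gives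
`T z ≤ T x = 0`. Hence `y` is an isolated point of the support. As `y k ≠ 0`, reflecting `y` in
coordinate `k` gives a different point of the support, contradicting connectedness.
-/

open Finset

def LatticeAdj (d : ℕ) (x y : Fin d → ℤ) : Prop := ∑ i, |x i - y i| = 1

def NextNearestSameParity (d : ℕ) (z z' : Fin d → ℤ) : Prop :=
  (∑ i, z i) % 2 = (∑ i, z' i) % 2 ∧
    (univ.filter fun i => z i ≠ z' i).card ≤ 2 ∧
    ∑ i, |(|z i| - |z' i|)| = 2

theorem Fintype.sum_sub_sum_eq_of_forall_ne {ι M : Type*} [Fintype ι] [AddCommGroup M]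
    {f g : ι → M} {k : ι} (h : ∀ i, i ≠ k → f i = g i) :
    ∑ i, f i - ∑ i, g i = f k - g k := by
  rw [← sum_sub_distrib]
  exact Fintype.sum_eq_single k fun i hi => sub_eq_zero.mpr (h i hi)

theorem Int.abs_abs_sub_abs_eq_one {a b : ℤ} (h : |a - b| = 1) : |(|a| - |b|)| = 1 := by
  simp only [abs_eq_max_neg] at *
  omega

theorem Int.abs_add_one_eq_of_sq_lt {a b : ℤ} (h : |a - b| = 1) (hab : a ^ 2 < b ^ 2) :
    |a| + 1 = |b| := by
  have := abs_sub_abs_le_abs_sub b a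
  rw [abs_sub_comm, h] at this
  have := sq_lt_sq.mp hab
  omega

namespace LatticeAdj

variable {d : ℕ} {x y z : Fin d → ℤ}

theorem symm (h : LatticeAdj d x y) : LatticeAdj d y x := by
  unfold LatticeAdj at *
  simpa only [abs_sub_comm] using h

theorem exists_single_coord (h : LatticeAdj d x y) :
    ∃ k, |x k - y k| = 1 ∧ ∀ i, i ≠ k → x i = y i := by
  rw [LatticeAdj] at h
  have hnonneg : ∀ i ∈ univ, 0 ≤ |x i - y i| := fun i _ => abs_nonneg _
  obtain ⟨k, -, hk⟩ := exists_ne_zero_of_sum_ne_zero (h.trans_ne one_ne_zero)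
  refine ⟨k, ?_, fun i hik => ?_⟩
  · have := single_le_sum hnonneg (mem_univ k)
    have := abs_nonneg (x k - y k)
    omega
  · have := add_le_sum hnonneg (mem_univ i) (mem_univ k) hik
    have := (abs_nonneg _).lt_of_ne' hk
    have : |x i - y i| = 0 := by linarith [abs_nonneg (x i - y i)]
    exact sub_eq_zero.mp (abs_eq_zero.mp this)

theorem abs_sum_sub_sum (h : LatticeAdj d x y) : |∑ i, x i - ∑ i, y i| = 1 := by
  obtain ⟨k, hk, hxk⟩ := h.exists_single_coord
  rwa [Fintype.sum_sub_sum_eq_of_forall_ne hxk]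

theorem sum_emod_two_eq (hx : LatticeAdj d x y) (hz : LatticeAdj d z y) :
    (∑ i, z i) % 2 = (∑ i, x i) % 2 := by
  have hx := hx.abs_sum_sub_sum
  have hz := hz.abs_sum_sub_sum
  simp only [abs_eq_max_neg] at hx hz
  omega

theorem card_filter_ne_le_two (hx : LatticeAdj d x y) (hz : LatticeAdj d z y) :
    (univ.filter fun i => z i ≠ x i).card ≤ 2 := by
  classical
  obtain ⟨k, -, hxk⟩ := hx.exists_single_coord
  obtain ⟨j, -, hzj⟩ := hz.exists_single_coord
  refine (card_le_card fun i hi => ?_).trans (card_le_two (a := j) (b := k))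
  by_contra hjk
  simp only [mem_insert, mem_singleton, not_or] at hjk
  exact (mem_filter.mp hi).2 ((hzj i hjk.1).trans (hxk i hjk.2).symm)

theorem exists_abs_add_one_eq (h : LatticeAdj d x y) (hlt : ∑ i, x i ^ 2 < ∑ i, y i ^ 2) :
    ∃ k, |x k - y k| = 1 ∧ (∀ i, i ≠ k → x i = y i) ∧ |x k| + 1 = |y k| := by
  obtain ⟨k, hk, hxk⟩ := h.exists_single_coord
  have hsq := Fintype.sum_sub_sum_eq_of_forall_ne (f := fun i => x i ^ 2) (g := fun i => y i ^ 2)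
    (k := k) fun i hi => by rw [hxk i hi]
  exact ⟨k, hk, hxk, Int.abs_add_one_eq_of_sq_lt hk (by linarith)⟩

theorem sum_abs_sub_abs_eq_two (hx : LatticeAdj d x y) (hz : LatticeAdj d z y)
    (hlt : ∑ i, x i ^ 2 < ∑ i, y i ^ 2) (hzx : z ≠ x) :
    ∑ i, |(|z i| - |x i|)| = 2 := by
  obtain ⟨k, hk, hxk, hk'⟩ := hx.exists_abs_add_one_eq hlt
  obtain ⟨j, hj, hzj⟩ := hz.exists_single_coord
  by_cases hjk : j = k
  · subst hjk
    have hzx' : z j ≠ x j := fun he =>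
      hzx (funext fun i => if hi : i = j then hi ▸ he else (hzj i hi).trans (hxk i hi).symm)
    rw [Fintype.sum_eq_single j fun i hi => by rw [hzj i hi, hxk i hi, sub_self, abs_zero]]
    simp only [abs_eq_max_neg] at *
    omega
  · rw [Fintype.sum_eq_add j k hjk fun i hi => by
      rw [hzj i hi.1, hxk i hi.2, sub_self, abs_zero]]
    rw [hxk j hjk, hzj k (Ne.symm hjk), Int.abs_abs_sub_abs_eq_one hj,
      abs_sub_comm, Int.abs_abs_sub_abs_eq_one hk]
    rfl

theorem nextNearestSameParity (hx : LatticeAdj d x y) (hz : LatticeAdj d z y)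
    (hlt : ∑ i, x i ^ 2 < ∑ i, y i ^ 2) (hzx : z ≠ x) : NextNearestSameParity d z x :=
  ⟨hx.sum_emod_two_eq hz, hx.card_filter_ne_le_two hz, hx.sum_abs_sub_abs_eq_two hz hlt hzx⟩

end LatticeAdj

theorem support_no_holes_general (d : ℕ) (T : (Fin d → ℤ) → ℕ)
    (hmono : ∀ z z' : Fin d → ℤ,
      (∑ i, z i) % 2 = (∑ i, z' i) % 2 →
      (Finset.univ.filter fun i => z i ≠ z' i).card ≤ 2 →
      (∑ i, |(|z i| - |z' i|)|) = 2 →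
      ∑ i, (z' i) ^ 2 ≤ ∑ i, (z i) ^ 2 →
      T z ≤ T z')
    (hconn : ∀ x y : Fin d → ℤ, 0 < T x → 0 < T y →
      Relation.ReflTransGen (fun a b => LatticeAdj d a b ∧ 0 < T a ∧ 0 < T b) x y)
    (hsymm : ∀ (σ : Equiv.Perm (Fin d)) (ε : Fin d → ℤ), (∀ i, ε i = 1 ∨ ε i = -1) →
      ∀ x : Fin d → ℤ, T (fun i => ε i * x (σ i)) = T x) :
    ¬ ∃ y x : Fin d → ℤ, 0 < T y ∧ T x = 0 ∧ LatticeAdj d x y ∧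
        (∑ i, (x i) ^ 2 < ∑ i, (y i) ^ 2) ∧
        (∀ x' : Fin d → ℤ, LatticeAdj d x' y → 0 < T x' →
          ∑ i, (x i) ^ 2 < ∑ i, (x' i) ^ 2) := by
  rintro ⟨y, x, hy, hx, hxy, hlt, hmin⟩
  have hisolated : ∀ z, LatticeAdj d z y → T z = 0 := by
    intro z hz
    by_contra hTz
    obtain ⟨hpar, hcard, habs⟩ :=
      hxy.nextNearestSameParity hz hlt fun h => hTz (h ▸ hx)
    have := hmono z x hpar hcard habs (hmin z hz (Nat.pos_of_ne_zero hTz)).le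
    omega
  obtain ⟨k, -, -, hk⟩ := hxy.exists_abs_add_one_eq hlt
  set ε : Fin d → ℤ := fun i => if i = k then -1 else 1
  have hε : ∀ i, ε i = 1 ∨ ε i = -1 := fun i => by by_cases hi : i = k <;> simp [ε, hi]
  have hy' : 0 < T (fun i => ε i * y i) := (hsymm (Equiv.refl _) ε hε y).symm ▸ hy
  rcases (hconn y _ hy hy').cases_head with hrefl | ⟨b, ⟨hyb, -, hb⟩, -⟩
  · have := congrFun hrefl k
    simp only [ε, if_pos rfl, neg_one_mul] at this
    have : y k = 0 := by linarith
    simp only [this, abs_zero] at hk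
    linarith [abs_nonneg (x k)]
  · exact hb.ne' (hisolated b hyb.symm)

/-- If a toppling function `T : ℤ^d → ℕ` satisfies `T(z) ≤ T(z')` for every
next-nearest-neighbor pair `z, z'` in the same parity class with `d(z') ≤ d(z)`, and its
support is path connected and invariant under coordinate permutations and sign changes, then
its support has no holes: there is no site `y` with `T(y) > 0` having a neighbor `x` with
`T(x) = 0` that is strictly closer to the origin than `y` and than all neighbors of `y` with
positive `T`. -/
theorem support_no_holes (d : ℕ) (hd : 1 ≤ d) (T : (Fin d → ℤ) → ℕ)
    (hmono : ∀ z z' : Fin d → ℤ,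
      (∑ i, z i) % 2 = (∑ i, z' i) % 2 →
      (Finset.univ.filter fun i => z i ≠ z' i).card ≤ 2 →
      (∑ i, |(|z i| - |z' i|)|) = 2 →
      ∑ i, (z' i) ^ 2 ≤ ∑ i, (z i) ^ 2 →
      T z ≤ T z')
    (hconn : ∀ x y : Fin d → ℤ, 0 < T x → 0 < T y →
      Relation.ReflTransGen (fun a b => LatticeAdj d a b ∧ 0 < T a ∧ 0 < T b) x y)
    (hsymm : ∀ (σ : Equiv.Perm (Fin d)) (ε : Fin d → ℤ), (∀ i, ε i = 1 ∨ ε i = -1) →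
      ∀ x : Fin d → ℤ, T (fun i => ε i * x (σ i)) = T x) :
    ¬ ∃ y x : Fin d → ℤ, 0 < T y ∧ T x = 0 ∧ LatticeAdj d x y ∧
        (∑ i, (x i) ^ 2 < ∑ i, (y i) ^ 2) ∧
        (∀ x' : Fin d → ℤ, LatticeAdj d x' y → 0 < T x' →
          ∑ i, (x i) ^ 2 < ∑ i, (x' i) ^ 2) :=
  support_no_holes_general d T hmono hconn hsymm
end

section
/- If the particle clusters of the rotor-router model satisfy V_{n,RR,h-1} ⊆ V_{n,DR,h} ⊆ V_{n,RR,h} (as finite subsets of Z^d), V_{n,RR,h} rescaled by (n/|h|)^{-1/d} converges to the unit ball B in symmetric-difference measure for every fixed h ≤ -1, then limsup_{n→∞} λ((n/|h|)^{-1/d} V_{n,DR,h} △ B) ≤ 1 − |h|/(|h|+1), and hence lim_{h→−∞} limsup_{n→∞} λ((n/|h|)^{-1/d} V_{n,DR,h} △ B) = 0. -/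
/-!
With `s = (n/|h|)^(-1/d)`, `t = (n/(|h|+1))^(-1/d)` and `c = (|h|/(|h|+1))^(1/d) ≤ 1` we have
`s = c * t`. If `x ∈ B` misses `s • V_DR` but lies in `c • B`, then `x / c ∈ B` misses
`t • V_{RR,h-1}`, since `c • t • V_{RR,h-1} ⊆ s • V_DR`; points of `s • V_DR` outside `B` lie in
`s • V_{RR,h}`. Hence `s • V_DR △ B` is covered by `s • V_{RR,h} △ B`, the annulus `B \ c • B` of
volume `1 - c^d = 1 - |h|/(|h|+1)`, and `c • (t • V_{RR,h-1} △ B)`, whose volume is at most that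
of `t • V_{RR,h-1} △ B`; the first and last tend to `0` as `n → ∞`,
and `1 - |h|/(|h|+1) = 1/(|h|+1) → 0` as `h → -∞`.
-/

open MeasureTheory Pointwise Filter

open scoped ENNReal Topology

theorem symmDiff_smul_subset_of_subset {M α : Type*} [Monoid M] [MulAction M α]
    {V' V U : Set α} (hV' : V' ⊆ V) (hU : V ⊆ U) (B : Set α) (c t : M) :
    symmDiff ((c * t) • V) B ⊆
      symmDiff ((c * t) • U) B ∪ (B \ c • B ∪ c • symmDiff (t • V') B) := by
  intro x hx
  rcases Set.mem_symmDiff.1 hx with ⟨hxV, hxB⟩ | ⟨hxB, hxV⟩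
  · exact Or.inl (Or.inl ⟨Set.smul_set_mono hU hxV, hxB⟩)
  by_cases hxc : x ∈ c • B
  · obtain ⟨y, hyB, rfl⟩ := hxc
    have hyV' : y ∉ t • V' := fun hyV' =>
      hxV (Set.smul_set_mono hV' (by rw [mul_smul]; exact Set.smul_mem_smul_set hyV'))
    exact Or.inr (Or.inr (Set.smul_mem_smul_set (Or.inr ⟨hyB, hyV'⟩)))
  · exact Or.inr (Or.inl ⟨hxB, hxc⟩)

section AddHaar

variable {E : Type*} [NormedAddCommGroup E] [NormedSpace ℝ E] [MeasurableSpace E]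
  [BorelSpace E] [FiniteDimensional ℝ E] (μ : Measure E) [μ.IsAddHaarMeasure]

theorem addHaar_smul_le_of_abs_le_one {c : ℝ} (hc : |c| ≤ 1) (s : Set E) :
    μ (c • s) ≤ μ s := by
  rw [Measure.addHaar_smul, abs_pow]
  exact mul_le_of_le_one_left zero_le
    (ENNReal.ofReal_le_one.2 (pow_le_one₀ (abs_nonneg c) hc))

theorem addHaar_diff_smul_of_balanced {B : Set E} (hB : Balanced ℝ B) (hBm : MeasurableSet B)
    (hfin : μ B ≠ ∞) {c : ℝ} (hc : |c| ≤ 1) :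
    μ (B \ c • B) = μ B - ENNReal.ofReal (|c| ^ Module.finrank ℝ E) * μ B := by
  rw [measure_sdiff (hB c (by rwa [Real.norm_eq_abs])) (hBm.const_smul₀ c).nullMeasurableSet
    (ne_top_of_le_ne_top hfin (addHaar_smul_le_of_abs_le_one μ hc B)),
    Measure.addHaar_smul, abs_pow]

theorem addHaar_symmDiff_smul_le {V' V U B : Set E} (hV' : V' ⊆ V) (hU : V ⊆ U)
    (hB : Balanced ℝ B) (hBm : MeasurableSet B) (hfin : μ B ≠ ∞) {c : ℝ} (hc : |c| ≤ 1)
    (t : ℝ) :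
    μ (symmDiff ((c * t) • V) B) ≤
      μ (symmDiff ((c * t) • U) B) +
        (μ B - ENNReal.ofReal (|c| ^ Module.finrank ℝ E) * μ B) + μ (symmDiff (t • V') B) :=
  calc μ (symmDiff ((c * t) • V) B)
      ≤ μ (symmDiff ((c * t) • U) B) + (μ (B \ c • B) + μ (c • symmDiff (t • V') B)) :=
        (measure_mono (symmDiff_smul_subset_of_subset hV' hU B c t)).trans
          ((measure_union_le _ _).trans (add_le_add le_rfl (measure_union_le _ _)))
    _ ≤ _ := by
        rw [← add_assoc, addHaar_diff_smul_of_balanced μ hB hBm hfin hc]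
        exact add_le_add le_rfl (addHaar_smul_le_of_abs_le_one μ hc _)

end AddHaar

theorem Real.div_rpow_neg_eq_mul {x a b : ℝ} (hx : 0 ≤ x) (ha : 0 < a) (hb : 0 < b) (r : ℝ) :
    (x / a) ^ (-r) = (a / b) ^ r * (x / b) ^ (-r) := by
  rw [show x / a = x / b * (b / a) by field_simp, Real.mul_rpow (by positivity) (by positivity),
    Real.rpow_neg (div_pos hb ha).le, ← Real.inv_rpow (div_pos hb ha).le, inv_div, mul_comm]

noncomputable def scaledDiscrepancy (d : ℕ) (B : Set (EuclideanSpace ℝ (Fin d)))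
    (V : ℕ → Set (EuclideanSpace ℝ (Fin d))) (a : ℝ) (n : ℕ) : ℝ≥0∞ :=
  volume (symmDiff ((((n : ℝ) / a) ^ (-(1 : ℝ) / d)) • V n) B)

theorem scaledDiscrepancy_le {d : ℕ} (hd : d ≠ 0) {B : Set (EuclideanSpace ℝ (Fin d))}
    (hB : Balanced ℝ B) (hBm : MeasurableSet B) (hvol : volume B = 1)
    {V' V U : ℕ → Set (EuclideanSpace ℝ (Fin d))} (hV' : ∀ n, V' n ⊆ V n)
    (hU : ∀ n, V n ⊆ U n) {a b : ℝ} (ha : 0 < a) (hab : a ≤ b) (n : ℕ) :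
    scaledDiscrepancy d B V a n ≤
      scaledDiscrepancy d B U a n + ENNReal.ofReal (1 - a / b) +
        scaledDiscrepancy d B V' b n := by
  have hab₀ : 0 ≤ a / b := (div_pos ha (ha.trans_le hab)).le
  set c := (a / b) ^ ((1 : ℝ) / d)
  have hc : |c| ≤ 1 := by
    rw [abs_of_nonneg (Real.rpow_nonneg hab₀ _)]
    exact Real.rpow_le_one hab₀ (div_le_one_of_le₀ hab (ha.le.trans hab)) (by positivity)
  have hcd : |c| ^ d = a / b := by
    rw [abs_of_nonneg (Real.rpow_nonneg hab₀ _), ← Real.rpow_natCast, ← Real.rpow_mul hab₀,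
      one_div_mul_cancel (Nat.cast_ne_zero.2 hd), Real.rpow_one]
  have hscale : ((n : ℝ) / a) ^ (-(1 : ℝ) / d) = c * ((n : ℝ) / b) ^ (-(1 : ℝ) / d) := by
    rw [neg_div]; exact Real.div_rpow_neg_eq_mul n.cast_nonneg ha (ha.trans_le hab) _
  have := addHaar_symmDiff_smul_le volume (hV' n) (hU n) hB hBm (by simp [hvol]) hc
    (((n : ℝ) / b) ^ (-(1 : ℝ) / d))
  rwa [finrank_euclideanSpace_fin, hcd, hvol, mul_one, ← ENNReal.ofReal_one,
    ← ENNReal.ofReal_sub _ hab₀, ← hscale] at this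

theorem limsup_scaledDiscrepancy_le {d : ℕ} (hd : d ≠ 0) {B : Set (EuclideanSpace ℝ (Fin d))}
    (hB : Balanced ℝ B) (hBm : MeasurableSet B) (hvol : volume B = 1)
    {V' V U : ℕ → Set (EuclideanSpace ℝ (Fin d))} (hV' : ∀ n, V' n ⊆ V n)
    (hU : ∀ n, V n ⊆ U n) {a b : ℝ} (ha : 0 < a) (hab : a ≤ b)
    (hUlim : Tendsto (scaledDiscrepancy d B U a) atTop (𝓝 0))
    (hV'lim : Tendsto (scaledDiscrepancy d B V' b) atTop (𝓝 0)) :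
    limsup (scaledDiscrepancy d B V a) atTop ≤ ENNReal.ofReal (1 - a / b) := by
  have hlim :=
    (hUlim.add (tendsto_const_nhds (x := ENNReal.ofReal (1 - a / b)))).add hV'lim
  rw [zero_add, add_zero] at hlim
  calc limsup (scaledDiscrepancy d B V a) atTop
      ≤ limsup (fun n => scaledDiscrepancy d B U a n + ENNReal.ofReal (1 - a / b) +
          scaledDiscrepancy d B V' b n) atTop :=
        limsup_le_limsup (.of_forall (scaledDiscrepancy_le hd hB hBm hvol hV' hU ha hab))
    _ = ENNReal.ofReal (1 - a / b) := hlim.limsup_eq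

theorem tendsto_ofReal_one_sub_abs_div_abs_add_one :
    Tendsto (fun h : ℤ => ENNReal.ofReal (1 - |(h : ℝ)| / (|(h : ℝ)| + 1))) atBot (𝓝 0) := by
  have hsimp (h : ℤ) : 1 - |(h : ℝ)| / (|(h : ℝ)| + 1) = (|(h : ℝ)| + 1)⁻¹ := by
    field_simp; ring
  simp_rw [hsimp, ← ENNReal.ofReal_zero]
  refine ENNReal.tendsto_ofReal (tendsto_inv_atTop_zero.comp
    (tendsto_atTop_add_const_right _ 1 ?_))
  exact tendsto_abs_atBot_atTop.comp (tendsto_intCast_atBot_iff.2 tendsto_id)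

theorem dr_limit_shape_sphere_general (d : ℕ) (hd : 1 ≤ d)
    (ρ : ℝ) (B : Set (EuclideanSpace ℝ (Fin d)))
    (hB : B = Metric.ball 0 ρ) (hvol : volume B = 1)
    (VRR VDR : ℤ → ℕ → Set (EuclideanSpace ℝ (Fin d)))
    (hsub : ∀ h : ℤ, h ≤ -1 → ∀ n : ℕ, VRR (h - 1) n ⊆ VDR h n ∧ VDR h n ⊆ VRR h n)
    (hconv : ∀ h : ℤ, h ≤ -1 →
      Tendsto (fun n : ℕ =>
          volume (symmDiff ((((n : ℝ) / |(h : ℝ)|) ^ (-(1 : ℝ) / d)) • VRR h n) B))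
        atTop (nhds 0)) :
    (∀ h : ℤ, h ≤ -1 →
      limsup (fun n : ℕ =>
          volume (symmDiff ((((n : ℝ) / |(h : ℝ)|) ^ (-(1 : ℝ) / d)) • VDR h n) B)) atTop
        ≤ ENNReal.ofReal (1 - |(h : ℝ)| / (|(h : ℝ)| + 1))) ∧
    Tendsto (fun h : ℤ =>
        limsup (fun n : ℕ =>
          volume (symmDiff ((((n : ℝ) / |(h : ℝ)|) ^ (-(1 : ℝ) / d)) • VDR h n) B)) atTop)
      atBot (nhds 0) := by
  have hbound (h : ℤ) (hh : h ≤ -1) :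
      limsup (scaledDiscrepancy d B (VDR h) |(h : ℝ)|) atTop
        ≤ ENNReal.ofReal (1 - |(h : ℝ)| / (|(h : ℝ)| + 1)) := by
    have hh' : (h : ℝ) ≤ -1 := by exact_mod_cast hh
    have habs : |((h - 1 : ℤ) : ℝ)| = |(h : ℝ)| + 1 := by
      push_cast; rw [abs_of_neg (by linarith), abs_of_neg (by linarith)]; ring
    have hlim := hconv (h - 1) (by omega)
    rw [habs] at hlim
    subst hB
    exact limsup_scaledDiscrepancy_le (by omega) balanced_ball_zero measurableSet_ball hvol
      (fun n => (hsub h hh n).1) (fun n => (hsub h hh n).2) (abs_pos_of_neg (by linarith))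
      (by linarith) (hconv h hh) hlim
  refine ⟨hbound, tendsto_of_tendsto_of_tendsto_of_le_of_le' tendsto_const_nhds
    tendsto_ofReal_one_sub_abs_div_abs_add_one (.of_forall fun _ => zero_le) ?_⟩
  filter_upwards [eventually_le_atBot (-1 : ℤ)] with h hh
  exact hbound h hh

/-- If the particle clusters (viewed as subsets of `ℝ^d`) satisfy
`V_{n,RR,h-1} ⊆ V_{n,DR,h} ⊆ V_{n,RR,h}` and for every fixed `h ≤ -1` the rotor-router
cluster `V_{n,RR,h}` rescaled by `(n/|h|)^{-1/d}` converges to the unit-volume ball `B` in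
symmetric-difference measure, then for every `h ≤ -1` we have
`limsup_n λ((n/|h|)^{-1/d} V_{n,DR,h} △ B) ≤ 1 − |h|/(|h|+1)`, and hence this `limsup`
tends to `0` as `h → −∞`. -/
theorem dr_limit_shape_sphere (d : ℕ) (hd : 1 ≤ d)
    (ρ : ℝ) (hρ : 0 < ρ) (B : Set (EuclideanSpace ℝ (Fin d)))
    (hB : B = Metric.ball 0 ρ) (hvol : volume B = 1)
    (VRR VDR : ℤ → ℕ → Set (EuclideanSpace ℝ (Fin d)))
    (hsub : ∀ h : ℤ, h ≤ -1 → ∀ n : ℕ, VRR (h - 1) n ⊆ VDR h n ∧ VDR h n ⊆ VRR h n)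
    (hconv : ∀ h : ℤ, h ≤ -1 →
      Tendsto (fun n : ℕ =>
          volume (symmDiff ((((n : ℝ) / |(h : ℝ)|) ^ (-(1 : ℝ) / d)) • VRR h n) B))
        atTop (nhds 0)) :
    (∀ h : ℤ, h ≤ -1 →
      limsup (fun n : ℕ =>
          volume (symmDiff ((((n : ℝ) / |(h : ℝ)|) ^ (-(1 : ℝ) / d)) • VDR h n) B)) atTop
        ≤ ENNReal.ofReal (1 - |(h : ℝ)| / (|(h : ℝ)| + 1))) ∧
    Tendsto (fun h : ℤ =>
        limsup (fun n : ℕ =>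
          volume (symmDiff ((((n : ℝ) / |(h : ℝ)|) ^ (-(1 : ℝ) / d)) • VDR h n) B)) atTop)
      atBot (nhds 0) :=
  dr_limit_shape_sphere_general d hd ρ B hB hvol VRR VDR hsub hconv
end
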